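/- arXiv:0812.4843 — 9 statements merged into one kernel-verified Lean document; each statement's English description precedes it below -/
import Mathlib

section
/- The iteration map T : Ω → Ω induced by the preconditioned equations (i.e., T(r^p) is the unique r^{p+1} ∈ Ω with ψ^QCE_j(r^{p+1}) + ψ^G_j(r^p) + Φ_j = 0 for all j) is a contraction in the maximum norm: if r^p ↦ r^{p+1} and s^p ↦ s^{p+1} under T, then ‖r^{p+1} − s^{p+1}‖_∞ ≤ α ‖r^p − s^p‖_∞ where α := 16|φ''(2 r_L)| / (φ''(r_U) − 5|φ''(2 r_L)|), and moreover α < 1. -/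
open Finset

/-- `I_j(r) := 2φ'(2r_j) − φ'(r_j + r_{j−1}) − φ'(r_j + r_{j+1})`. -/
noncomputable def Ifun (φ : ℝ → ℝ) (r : ℤ → ℝ) (j : ℤ) : ℝ :=
  2 * deriv φ (2 * r j) - deriv φ (r j + r (j - 1)) - deriv φ (r j + r (j + 1))

/-- The force-based conjugate forces `ψ^QCF_j(r)` (for `−N ≤ j ≤ N`). -/
noncomputable def psiQCF (φ : ℝ → ℝ) (K : ℤ) (r : ℤ → ℝ) (j : ℤ) : ℝ :=
  if j ≤ -K then -(deriv φ (r j) + 2 * deriv φ (2 * r j))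
  else if j ≤ K then
    -(deriv φ (r j) + deriv φ (r j + r (j - 1)) + deriv φ (r j + r (j + 1)) +
      Ifun φ r (-K))
  else -(deriv φ (r j) + 2 * deriv φ (2 * r j) + Ifun φ r (-K) - Ifun φ r K)

/-- Atomistic site energy `E^a_j(r)`. -/
noncomputable def Ea (φ : ℝ → ℝ) (r : ℤ → ℝ) (j : ℤ) : ℝ :=
  (φ (r j) + φ (r j + r (j + 1)) + φ (r (j - 1)) + φ (r (j - 1) + r (j - 2))) / 2

/-- Continuum (local) site energy `E^L_j(r)`; terms with index outside `{−N, …, N}`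
are set to zero. -/
noncomputable def EL (φ : ℝ → ℝ) (N : ℤ) (ν : ℤ → ℤ) (r : ℤ → ℝ) (j : ℤ) : ℝ :=
  ((if -N ≤ j ∧ j ≤ N then (ν j : ℝ) * (φ (r j) + φ (2 * r j)) else 0) +
   (if -N ≤ j - 1 ∧ j - 1 ≤ N then
      (ν (j - 1) : ℝ) * (φ (r (j - 1)) + φ (2 * r (j - 1))) else 0)) / 2

/-- The energy-based quasicontinuum energy `E^QCE(r)`. -/
noncomputable def EQCE (φ : ℝ → ℝ) (N K : ℤ) (ν : ℤ → ℤ) (r : ℤ → ℝ) : ℝ :=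
  (∑ j ∈ Icc (-N) (-K), EL φ N ν r j) + (∑ j ∈ Icc (-K + 1) K, Ea φ r j) +
    (∑ j ∈ Icc (K + 1) (N + 1), EL φ N ν r j)

/-- The energy-based conjugate forces `ψ^QCE_j(r) := −ν_j⁻¹ ∂E^QCE(r)/∂r_j`. -/
noncomputable def psiQCE (φ : ℝ → ℝ) (N K : ℤ) (ν : ℤ → ℤ) (r : ℤ → ℝ) (j : ℤ) : ℝ :=
  -((ν j : ℝ))⁻¹ * deriv (fun t => EQCE φ N K ν (Function.update r j t)) (r j)

/-- The ghost-force correction `ψ^G_j(r) := ψ^QCF_j(r) − ψ^QCE_j(r)`. -/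
noncomputable def psiG (φ : ℝ → ℝ) (N K : ℤ) (ν : ℤ → ℤ) (r : ℤ → ℝ) (j : ℤ) : ℝ :=
  psiQCF φ K r j - psiQCE φ N K ν r j

/-!
Fix a site `j` at which `|r^{p+1}_j - s^{p+1}_j|` is maximal. Differentiating `E^QCE` gives
`ψ^QCE_j = -(φ'(r_j) + b_j φ'(2r_j) + c_j φ'(r_j + r_{j+1}) + c_{j-1} φ'(r_{j-1} + r_j))` with
weights `b_j + c_j + c_{j-1} ≤ 5/2`. On `[r_L, r_U]` the potential is convex with `φ''` decreasing,
so the first term moves by at least `φ''(r_U)` times the gap, while on `[2r_L, 2r_U]` it is concave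
with `φ''` increasing, so every bond term `φ'(r_a + r_b)` is `2|φ''(2r_L)|`-Lipschitz in the
maximum norm. The ghost-force correction is a combination of bond terms of total weight at most 8,
evaluated at the old iterates. Subtracting the two equations at site `j` therefore gives
`(φ''(r_U) - 5|φ''(2r_L)|) ‖r^{p+1} - s^{p+1}‖ ≤ 16|φ''(2r_L)| ‖r^p - s^p‖`, and the hypothesis
`φ''(r_U) + 21 φ''(2r_L) > 0` is exactly `α < 1`.
-/

/- The weights `b_j` and `c_i` of `ψ^QCE` (see `psiQCE_eq`): `cbWeight K j` counts the continuum
site energies `E^L_j`, `E^L_{j+1}` containing `φ(2r_j)`, and `bondWeight K i` is half the number of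
atomistic site energies `E^a_i`, `E^a_{i+2}` containing the bond `φ(r_i + r_{i+1})`. -/
noncomputable def cbWeight (K j : ℤ) : ℝ :=
  (if j ≤ -K then 1 else 0) + (if j ≤ -K - 1 then 1 else 0) +
    (if K + 1 ≤ j then 1 else 0) + (if K ≤ j then 1 else 0)

noncomputable def bondWeight (K i : ℤ) : ℝ :=
  ((if -K + 1 ≤ i ∧ i ≤ K then 1 else 0) + (if -K - 1 ≤ i ∧ i ≤ K - 2 then 1 else 0)) / 2

lemma hasDerivAt_update_apply (r : ℤ → ℝ) (j a : ℤ) :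
    HasDerivAt (fun t => Function.update r j t a) (if a = j then 1 else 0) (r j) := by
  by_cases h : a = j
  · subst h
    simpa using hasDerivAt_id' (r a)
  · simpa [Function.update_of_ne h, h] using hasDerivAt_const (r j) (r a)

section SiteEnergies

variable {φ : ℝ → ℝ} (hφ : DifferentiableOn ℝ φ (Set.Ioi 0)) {r : ℤ → ℝ} (j : ℤ)
include hφ

lemma hasDerivAt_comp_update {a : ℤ} {c : ℝ} (hc : 0 < c * r a) :
    HasDerivAt (fun t => φ (c * Function.update r j t a))
      (deriv φ (c * r a) * (c * (if a = j then 1 else 0))) (r j) :=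
  ((hφ.differentiableAt (Ioi_mem_nhds hc)).hasDerivAt.comp_of_eq (r j)
    ((hasDerivAt_update_apply r j a).const_mul c) (by simp))

lemma hasDerivAt_comp_update_add {a b : ℤ} (hab : 0 < r a + r b) :
    HasDerivAt (fun t => φ (Function.update r j t a + Function.update r j t b))
      (deriv φ (r a + r b) * ((if a = j then 1 else 0) + (if b = j then 1 else 0))) (r j) :=
  ((hφ.differentiableAt (Ioi_mem_nhds hab)).hasDerivAt.comp_of_eq (r j)
    ((hasDerivAt_update_apply r j a).fun_add (hasDerivAt_update_apply r j b)) (by simp))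

lemma hasDerivAt_cbSite {a : ℤ} (ha : 0 < r a) :
    HasDerivAt (fun t => φ (Function.update r j t a) + φ (2 * Function.update r j t a))
      ((deriv φ (r a) + 2 * deriv φ (2 * r a)) * (if a = j then 1 else 0)) (r j) := by
  have h1 := hasDerivAt_comp_update hφ j (c := 1) (by simpa using ha)
  have h2 := hasDerivAt_comp_update hφ j (c := 2) (by positivity)
  simp only [one_mul] at h1
  exact (h1.fun_add h2).congr_deriv (by ring)

lemma hasDerivAt_EL (N : ℤ) (ν : ℤ → ℤ) (hr : ∀ a ∈ Icc (-N) N, 0 < r a) (i : ℤ) :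
    HasDerivAt (fun t => EL φ N ν (Function.update r j t) i)
      (((if -N ≤ i ∧ i ≤ N then
          ν i * (deriv φ (r i) + 2 * deriv φ (2 * r i)) else 0) * (if i = j then 1 else 0) +
        (if -N ≤ i - 1 ∧ i - 1 ≤ N then ν (i - 1) * (deriv φ (r (i - 1)) +
          2 * deriv φ (2 * r (i - 1))) else 0) * (if i - 1 = j then 1 else 0)) / 2) (r j) := by
  have hsite : ∀ a, HasDerivAt (fun t => if -N ≤ a ∧ a ≤ N then
      (ν a : ℝ) * (φ (Function.update r j t a) + φ (2 * Function.update r j t a)) else 0)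
      ((if -N ≤ a ∧ a ≤ N then ν a * (deriv φ (r a) + 2 * deriv φ (2 * r a)) else 0) *
        (if a = j then 1 else 0)) (r j) := by
    intro a
    by_cases ha : -N ≤ a ∧ a ≤ N
    · simpa only [if_pos ha, mul_assoc] using
        (hasDerivAt_cbSite hφ j (hr a (mem_Icc.mpr ha))).const_mul (ν a : ℝ)
    · simpa only [if_neg ha, zero_mul] using hasDerivAt_const (r j) (0 : ℝ)
  exact ((hsite i).fun_add (hsite (i - 1))).div_const 2

lemma hasDerivAt_Ea {i : ℤ} (hr : ∀ a, i - 2 ≤ a → a ≤ i + 1 → 0 < r a) :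
    HasDerivAt (fun t => Ea φ (Function.update r j t) i)
      ((deriv φ (r i) * (if i = j then 1 else 0) +
        deriv φ (r i + r (i + 1)) * ((if i = j then 1 else 0) + (if i + 1 = j then 1 else 0)) +
        deriv φ (r (i - 1)) * (if i - 1 = j then 1 else 0) +
        deriv φ (r (i - 1) + r (i - 2)) *
          ((if i - 1 = j then 1 else 0) + (if i - 2 = j then 1 else 0))) / 2) (r j) := by
  have h0 := hasDerivAt_comp_update hφ j (c := 1) (a := i)
    (by simpa using hr i (by omega) (by omega))
  have h1 := hasDerivAt_comp_update hφ j (c := 1) (a := i - 1)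
    (by simpa using hr (i - 1) (by omega) (by omega))
  simp only [one_mul] at h0 h1
  exact ((((h0.fun_add (hasDerivAt_comp_update_add hφ j (b := i + 1)
    (add_pos (hr i (by omega) (by omega)) (hr _ (by omega) (by omega))))).fun_add h1).fun_add
    (hasDerivAt_comp_update_add hφ j (add_pos (hr (i - 1) (by omega) (by omega))
      (hr (i - 2) (by omega) (by omega))))).div_const 2)

end SiteEnergies

lemma psiQCE_eq {φ : ℝ → ℝ} (hφ : DifferentiableOn ℝ φ (Set.Ioi 0)) {N K : ℤ} (hK : 2 ≤ K)
    (hN : K + 1 ≤ N) {ν : ℤ → ℤ} (hν1 : ∀ j ∈ Icc (-K - 1) (K + 1), ν j = 1) {r : ℤ → ℝ}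
    (hr : ∀ i ∈ Icc (-N) N, 0 < r i) {j : ℤ} (hj : j ∈ Icc (-N) N) (hνj : ν j ≠ 0) :
    psiQCE φ N K ν r j =
      -(deriv φ (r j) + cbWeight K j * deriv φ (2 * r j) +
        bondWeight K j * deriv φ (r j + r (j + 1)) +
        bondWeight K (j - 1) * deriv φ (r (j - 1) + r j)) := by
  have hEa := HasDerivAt.fun_sum (u := Icc (-K + 1) K) fun i hi => hasDerivAt_Ea hφ j (r := r)
    (i := i) fun a h1 h2 => hr a (by simp only [mem_Icc] at hi ⊢; omega)
  have hEL := fun s : Finset ℤ =>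
    HasDerivAt.fun_sum (u := s) fun i _ => hasDerivAt_EL hφ j N ν hr i
  have htot := ((hEL (Icc (-N) (-K))).fun_add hEa).fun_add (hEL (Icc (K + 1) (N + 1)))
  simp only [← sum_div, sum_add_distrib, mul_add, mul_ite, mul_one, mul_zero, sub_eq_iff_eq_add,
    ← eq_sub_iff_add_eq, sum_ite_eq', add_sub_cancel_right, sub_add_cancel, mem_Icc,
    show j + 1 - 2 = j - 1 by ring, show j + 2 - 1 = j + 1 by ring] at htot
  rw [psiQCE, show deriv (fun t => EQCE φ N K ν (Function.update r j t)) (r j) = _ from htot.deriv,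
    add_comm (r j) (r (j - 1)), add_comm (r (j + 1)) (r j)]
  rw [mem_Icc] at hj
  rcases (by omega : j ≤ -K - 2 ∨ j = -K - 1 ∨ j = -K ∨ j = -K + 1 ∨
      (-K + 2 ≤ j ∧ j ≤ K - 2) ∨ j = K - 1 ∨ j = K ∨ j = K + 1 ∨ K + 2 ≤ j) with
    h | h | h | h | h | h | h | h | h
  all_goals simp (disch := omega) only [cbWeight, bondWeight, if_pos, if_neg]
  all_goals first
    | (rw [hν1 j (mem_Icc.mpr (by omega))]; push_cast; ring)
    | (field_simp; ring)

lemma abs_Ifun_sub_le {φ : ℝ → ℝ} {x y : ℤ → ℝ} {k : ℤ} {β : ℝ}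
    (h2 : |deriv φ (2 * x k) - deriv φ (2 * y k)| ≤ β)
    (hl : |deriv φ (x k + x (k - 1)) - deriv φ (y k + y (k - 1))| ≤ β)
    (hr : |deriv φ (x k + x (k + 1)) - deriv φ (y k + y (k + 1))| ≤ β) :
    |Ifun φ x k - Ifun φ y k| ≤ 4 * β := by
  rw [abs_le] at *
  unfold Ifun
  constructor <;> linarith

section BondBounds

variable {φ : ℝ → ℝ} {N K : ℤ} {ν : ℤ → ℤ} {x y : ℤ → ℝ} {β : ℝ} {j : ℤ}
  (hφ : DifferentiableOn ℝ φ (Set.Ioi 0)) (hK : 2 ≤ K) (hN : K + 2 ≤ N)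
  (hν1 : ∀ j ∈ Icc (-K - 1) (K + 1), ν j = 1)
  (hx : ∀ i ∈ Icc (-N) N, 0 < x i) (hy : ∀ i ∈ Icc (-N) N, 0 < y i)
  (hbond : ∀ a ∈ Icc (-N) N, ∀ b ∈ Icc (-N) N, |deriv φ (x a + x b) - deriv φ (y a + y b)| ≤ β)
  (hj : j ∈ Icc (-N) N) (hνj : ν j ≠ 0)
include hφ hK hN hν1 hx hy hbond hj hνj

lemma abs_psiG_sub_le : |psiG φ N K ν x j - psiG φ N K ν y j| ≤ 8 * β := by
  have bond : ∀ a b, -N ≤ a → a ≤ N → -N ≤ b → b ≤ N →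
      |deriv φ (x a + x b) - deriv φ (y a + y b)| ≤ β := fun a b ha ha' hb hb' =>
    hbond a (mem_Icc.mpr ⟨ha, ha'⟩) b (mem_Icc.mpr ⟨hb, hb'⟩)
  have double : ∀ a, -N ≤ a → a ≤ N → |deriv φ (2 * x a) - deriv φ (2 * y a)| ≤ β :=
    fun a ha ha' => by simpa only [two_mul] using bond a a ha ha' ha ha'
  have hI : ∀ k, -N + 1 ≤ k → k ≤ N - 1 → |Ifun φ x k - Ifun φ y k| ≤ 4 * β :=
    fun k hk hk' => abs_Ifun_sub_le (double k (by omega) (by omega))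
      (bond k (k - 1) (by omega) (by omega) (by omega) (by omega))
      (bond k (k + 1) (by omega) (by omega) (by omega) (by omega))
  obtain ⟨hj1, hj2⟩ := mem_Icc.mp hj
  have hβ : 0 ≤ β := (abs_nonneg _).trans (bond j j hj1 hj2 hj1 hj2)
  have hIl := abs_le.mp (hI (-K) (by omega) (by omega))
  have hIr := abs_le.mp (hI K (by omega) (by omega))
  rw [psiG, psiG, psiQCE_eq hφ hK (by omega) hν1 hx hj hνj,
    psiQCE_eq hφ hK (by omega) hν1 hy hj hνj, abs_le]
  rcases (by omega : j ≤ -K - 2 ∨ (-K - 1 ≤ j ∧ j ≤ K) ∨ j = K + 1 ∨ K + 2 ≤ j) with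
    h | h | h | h
  · simp (disch := omega) only [psiQCF, cbWeight, bondWeight, if_pos, if_neg]
    constructor <;> linarith
  · have b0 := abs_le.mp (double j hj1 hj2)
    have b1 := abs_le.mp (bond j (j + 1) hj1 hj2 (by omega) (by omega))
    have b2 := abs_le.mp (bond (j - 1) j (by omega) (by omega) hj1 hj2)
    have b3 := abs_le.mp (bond j (j - 1) hj1 hj2 (by omega) (by omega))
    rcases (by omega : j = -K - 1 ∨ j = -K ∨ j = -K + 1 ∨ (-K + 2 ≤ j ∧ j ≤ K - 2) ∨
      j = K - 1 ∨ j = K) with h | h | h | h | h | h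
    all_goals simp (disch := omega) only [psiQCF, cbWeight, bondWeight, if_pos, if_neg]
    all_goals constructor <;> linarith
  · -- The bond `(K, K + 1)` enters both `I_K` and `ψ^QCE_{K+1}`; only after the two occurrences
    -- are merged is the total weight `15/2 ≤ 8`.
    subst h
    have b0 := abs_le.mp (double K (by omega) (by omega))
    have b1 := abs_le.mp (bond K (K + 1) (by omega) (by omega) (by omega) (by omega))
    have b2 := abs_le.mp (bond K (K - 1) (by omega) (by omega) (by omega) (by omega))
    simp (disch := omega) only [psiQCF, cbWeight, bondWeight, if_pos, if_neg,
      add_sub_cancel_right]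
    unfold Ifun at hIl ⊢
    constructor <;> linarith
  · simp (disch := omega) only [psiQCF, cbWeight, bondWeight, if_pos, if_neg]
    constructor <;> linarith

lemma psiQCE_sub_ge {c : ℝ} (hself : c * (x j - y j) ≤ deriv φ (x j) - deriv φ (y j)) :
    c * (x j - y j) - 5 / 2 * β ≤ psiQCE φ N K ν y j - psiQCE φ N K ν x j := by
  have bond : ∀ a b, -N ≤ a → a ≤ N → -N ≤ b → b ≤ N →
      |deriv φ (x a + x b) - deriv φ (y a + y b)| ≤ β := fun a b ha ha' hb hb' =>
    hbond a (mem_Icc.mpr ⟨ha, ha'⟩) b (mem_Icc.mpr ⟨hb, hb'⟩)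
  obtain ⟨hj1, hj2⟩ := mem_Icc.mp hj
  have b0 := abs_le.mp (show |deriv φ (2 * x j) - deriv φ (2 * y j)| ≤ β by
    simpa only [two_mul] using bond j j hj1 hj2 hj1 hj2)
  rw [psiQCE_eq hφ hK (by omega) hν1 hx hj hνj, psiQCE_eq hφ hK (by omega) hν1 hy hj hνj]
  rcases (by omega : j ≤ -K - 2 ∨ (-K - 1 ≤ j ∧ j ≤ K + 1) ∨ K + 2 ≤ j) with h | h | h
  · simp (disch := omega) only [cbWeight, bondWeight, if_pos, if_neg]
    linarith
  · have b1 := abs_le.mp (bond j (j + 1) hj1 hj2 (by omega) (by omega))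
    have b2 := abs_le.mp (bond (j - 1) j (by omega) (by omega) hj1 hj2)
    rcases (by omega : j = -K - 1 ∨ j = -K ∨ j = -K + 1 ∨ (-K + 2 ≤ j ∧ j ≤ K - 2) ∨
      j = K - 1 ∨ j = K ∨ j = K + 1) with h | h | h | h | h | h | h
    all_goals simp (disch := omega) only [cbWeight, bondWeight, if_pos, if_neg]
    all_goals linarith
  · simp (disch := omega) only [cbWeight, bondWeight, if_pos, if_neg]
    linarith

end BondBounds

section Potential

variable {φ : ℝ → ℝ} {a b : ℝ} (hφ : ContDiffOn ℝ 3 φ (Set.Ioi 0))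
include hφ

lemma contDiffOn_deriv_deriv : ContDiffOn ℝ 1 (deriv (deriv φ)) (Set.Ioi 0) :=
  (hφ.deriv_of_isOpen (m := 2) isOpen_Ioi (by norm_num)).deriv_of_isOpen isOpen_Ioi (by norm_num)

lemma differentiableOn_deriv : DifferentiableOn ℝ (deriv φ) (Set.Ioi 0) :=
  (hφ.deriv_of_isOpen (m := 2) isOpen_Ioi (by norm_num)).differentiableOn (by norm_num)

lemma antitoneOn_deriv_deriv (ha : 0 < a)
    (h3 : ∀ z ∈ Set.Ioo a b, deriv (deriv (deriv φ)) z ≤ 0) :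
    AntitoneOn (deriv (deriv φ)) (Set.Icc a b) := by
  have hsub : Set.Icc a b ⊆ Set.Ioi 0 := fun z hz => ha.trans_le hz.1
  refine antitoneOn_of_deriv_nonpos (convex_Icc a b)
    ((contDiffOn_deriv_deriv hφ).continuousOn.mono hsub) ?_ (by simpa using h3)
  exact ((contDiffOn_deriv_deriv hφ).differentiableOn one_ne_zero).mono
    (interior_subset.trans hsub)

lemma monotoneOn_deriv_deriv (ha : 0 < a)
    (h3 : ∀ z ∈ Set.Ioo a b, 0 ≤ deriv (deriv (deriv φ)) z) :
    MonotoneOn (deriv (deriv φ)) (Set.Icc a b) := by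
  have hsub : Set.Icc a b ⊆ Set.Ioi 0 := fun z hz => ha.trans_le hz.1
  refine monotoneOn_of_deriv_nonneg (convex_Icc a b)
    ((contDiffOn_deriv_deriv hφ).continuousOn.mono hsub) ?_ (by simpa using h3)
  exact ((contDiffOn_deriv_deriv hφ).differentiableOn one_ne_zero).mono
    (interior_subset.trans hsub)

lemma mul_sub_le_deriv_sub_deriv (ha : 0 < a)
    (h3 : ∀ z ∈ Set.Ioo a b, deriv (deriv (deriv φ)) z ≤ 0) {x y : ℝ}
    (hx : x ∈ Set.Icc a b) (hy : y ∈ Set.Icc a b) (hxy : x ≤ y) :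
    deriv (deriv φ) b * (y - x) ≤ deriv φ y - deriv φ x := by
  have hsub : Set.Icc a b ⊆ Set.Ioi 0 := fun z hz => ha.trans_le hz.1
  have hb : b ∈ Set.Icc a b := ⟨hx.1.trans hx.2, le_rfl⟩
  refine (convex_Icc a b).mul_sub_le_image_sub_of_le_deriv
    ((differentiableOn_deriv hφ).continuousOn.mono hsub)
    ((differentiableOn_deriv hφ).mono (interior_subset.trans hsub))
    (fun z hz => antitoneOn_deriv_deriv hφ ha h3 (interior_subset hz) hb ?_) x hx y hy hxy
  exact (interior_subset hz).2

lemma abs_deriv_sub_deriv_le (ha : 0 < a)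
    (h3 : ∀ z ∈ Set.Ioo a b, 0 ≤ deriv (deriv (deriv φ)) z) (h2 : deriv (deriv φ) b ≤ 0)
    {x y : ℝ} (hx : x ∈ Set.Icc a b) (hy : y ∈ Set.Icc a b) :
    |deriv φ x - deriv φ y| ≤ |deriv (deriv φ) a| * |x - y| := by
  have hsub : Set.Icc a b ⊆ Set.Ioi 0 := fun z hz => ha.trans_le hz.1
  have hab : a ≤ b := hx.1.trans hx.2
  have hbound : ∀ z ∈ Set.Icc a b, ‖deriv (deriv φ) z‖ ≤ |deriv (deriv φ) a| := by
    intro z hz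
    have hmono := monotoneOn_deriv_deriv hφ ha h3
    have hlow := hmono ⟨le_rfl, hab⟩ hz hz.1
    have hup := hmono hz ⟨hab, le_rfl⟩ hz.2
    rw [Real.norm_eq_abs, abs_of_nonpos (hup.trans h2), abs_of_nonpos (hlow.trans (hup.trans h2))]
    linarith
  simpa only [Real.norm_eq_abs] using (convex_Icc a b).norm_image_sub_le_of_norm_deriv_le
    (fun z hz => (differentiableOn_deriv hφ).differentiableAt (Ioi_mem_nhds (hsub hz)))
    hbound hy hx

lemma abs_deriv_bond_sub_le {rL rU : ℝ} (hrL : 0 < rL)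
    (h3U : ∀ z ∈ Set.Ioo (2 * rL) (2 * rU), 0 ≤ deriv (deriv (deriv φ)) z)
    (h2U : deriv (deriv φ) (2 * rU) ≤ 0) {s : Finset ℤ} {x y : ℤ → ℝ}
    (hx : ∀ i ∈ s, x i ∈ Set.Icc rL rU) (hy : ∀ i ∈ s, y i ∈ Set.Icc rL rU) {B : ℝ}
    (hB : ∀ i ∈ s, |x i - y i| ≤ B) :
    ∀ a ∈ s, ∀ b ∈ s,
      |deriv φ (x a + x b) - deriv φ (y a + y b)| ≤ 2 * |deriv (deriv φ) (2 * rL)| * B := by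
  intro a ha b hb
  obtain ⟨⟨hxa, hxa'⟩, ⟨hxb, hxb'⟩⟩ := And.intro (hx a ha) (hx b hb)
  obtain ⟨⟨hya, hya'⟩, ⟨hyb, hyb'⟩⟩ := And.intro (hy a ha) (hy b hb)
  calc |deriv φ (x a + x b) - deriv φ (y a + y b)|
      ≤ |deriv (deriv φ) (2 * rL)| * |(x a - y a) + (x b - y b)| := by
        rw [show x a - y a + (x b - y b) = x a + x b - (y a + y b) by ring]
        exact abs_deriv_sub_deriv_le hφ (by positivity) h3U h2U
          ⟨by linarith, by linarith⟩ ⟨by linarith, by linarith⟩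
    _ ≤ |deriv (deriv φ) (2 * rL)| * (B + B) :=
        mul_le_mul_of_nonneg_left ((abs_add_le _ _).trans (add_le_add (hB a ha) (hB b hb)))
          (abs_nonneg _)
    _ = 2 * |deriv (deriv φ) (2 * rL)| * B := by ring

end Potential

section Contraction

variable {φ : ℝ → ℝ} {rL rU : ℝ} {N K : ℤ} {ν : ℤ → ℤ} {Φ : ℤ → ℝ} {x y x' y' : ℤ → ℝ}
  (hφ : ContDiffOn ℝ 3 φ (Set.Ioi 0)) (hrL : 0 < rL)
  (h3L : ∀ z ∈ Set.Ioo rL rU, deriv (deriv (deriv φ)) z ≤ 0)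
  (h3U : ∀ z ∈ Set.Ioo (2 * rL) (2 * rU), 0 ≤ deriv (deriv (deriv φ)) z)
  (h2U : deriv (deriv φ) (2 * rU) ≤ 0) (hK : 2 ≤ K) (hN : K + 2 ≤ N)
  (hν : ∀ j ∈ Icc (-N) N, ν j ≠ 0) (hν1 : ∀ j ∈ Icc (-K - 1) (K + 1), ν j = 1)
  (hx : ∀ i ∈ Icc (-N) N, x i ∈ Set.Icc rL rU) (hy : ∀ i ∈ Icc (-N) N, y i ∈ Set.Icc rL rU)
  (hx' : ∀ i ∈ Icc (-N) N, x' i ∈ Set.Icc rL rU) (hy' : ∀ i ∈ Icc (-N) N, y' i ∈ Set.Icc rL rU)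
  (hx'eq : ∀ j ∈ Icc (-N) N, psiQCE φ N K ν x' j + psiG φ N K ν x j + Φ j = 0)
  (hy'eq : ∀ j ∈ Icc (-N) N, psiQCE φ N K ν y' j + psiG φ N K ν y j + Φ j = 0)
include hφ hrL h3L h3U h2U hK hN hν hν1 hx hy hx' hy' hx'eq hy'eq

lemma qce_contraction_at_max {M : ℝ} (hM : ∀ i ∈ Icc (-N) N, |x i - y i| ≤ M) {j : ℤ}
    (hj : j ∈ Icc (-N) N) (hmax : ∀ i ∈ Icc (-N) N, |x' i - y' i| ≤ x' j - y' j) :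
    (deriv (deriv φ) rU - 5 * |deriv (deriv φ) (2 * rL)|) * (x' j - y' j) ≤
      16 * |deriv (deriv φ) (2 * rL)| * M := by
  have hφ1 : DifferentiableOn ℝ φ (Set.Ioi 0) := hφ.differentiableOn (by norm_num)
  have hpos : ∀ z : ℤ → ℝ, (∀ i ∈ Icc (-N) N, z i ∈ Set.Icc rL rU) →
      ∀ i ∈ Icc (-N) N, 0 < z i := fun z hz i hi => hrL.trans_le (hz i hi).1
  have hself := mul_sub_le_deriv_sub_deriv hφ hrL h3L (hy' j hj) (hx' j hj)
    (sub_nonneg.mp ((abs_nonneg _).trans (hmax j hj)))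
  have hcoercive := psiQCE_sub_ge hφ1 hK hN hν1 (hpos x' hx') (hpos y' hy')
    (abs_deriv_bond_sub_le hφ hrL h3U h2U hx' hy' hmax) hj (hν j hj) hself
  have hghost := abs_psiG_sub_le hφ1 hK hN hν1 (hpos x hx) (hpos y hy)
    (abs_deriv_bond_sub_le hφ hrL h3U h2U hx hy hM) hj (hν j hj)
  linarith [hx'eq j hj, hy'eq j hj, le_abs_self (psiG φ N K ν x j - psiG φ N K ν y j)]

lemma qce_contraction_sup' (hne : (Icc (-N) N).Nonempty) :
    (deriv (deriv φ) rU - 5 * |deriv (deriv φ) (2 * rL)|) *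
        (Icc (-N) N).sup' hne (fun i => |x' i - y' i|) ≤
      16 * |deriv (deriv φ) (2 * rL)| * (Icc (-N) N).sup' hne (fun i => |x i - y i|) := by
  obtain ⟨j, hj, hjmax⟩ := exists_mem_eq_sup' hne fun i => |x' i - y' i|
  have hle : ∀ i ∈ Icc (-N) N, |x' i - y' i| ≤ |x' j - y' j| :=
    fun i hi => hjmax ▸ le_sup' (fun i => |x' i - y' i|) hi
  have hM : ∀ i ∈ Icc (-N) N, |x i - y i| ≤ (Icc (-N) N).sup' hne (fun i => |x i - y i|) :=
    fun i hi => le_sup' (fun i => |x i - y i|) hi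
  rw [hjmax]
  rcases le_total (y' j) (x' j) with h | h
  · rw [abs_of_nonneg (sub_nonneg.mpr h)] at hle ⊢
    exact qce_contraction_at_max hφ hrL h3L h3U h2U hK hN hν hν1 hx hy hx' hy' hx'eq hy'eq
      hM hj hle
  · rw [abs_sub_comm, abs_of_nonneg (sub_nonneg.mpr h)] at hle ⊢
    exact qce_contraction_at_max hφ hrL h3L h3U h2U hK hN hν hν1 hy hx hy' hx' hy'eq hx'eq
      (fun i hi => abs_sub_comm (y i) (x i) ▸ hM i hi) hj
      (fun i hi => abs_sub_comm (y' i) (x' i) ▸ hle i hi)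

end Contraction

/-- The iteration map induced by the preconditioned equations is a contraction on
`Ω = (r_L, r_U)^{2N+1}` in the maximum norm: if `r^p ↦ r^{p+1}` and `s^p ↦ s^{p+1}`,
then `‖r^{p+1} − s^{p+1}‖_∞ ≤ α ‖r^p − s^p‖_∞` where
`α = 16|φ''(2r_L)| / (φ''(r_U) − 5|φ''(2r_L)|) < 1`. -/
theorem stmt_1 (φ : ℝ → ℝ) (a₀ rt₁ rt₂ : ℝ)
    (hφC3 : ContDiffOn ℝ 3 φ (Set.Ioi 0))
    (ha₀ : 0 < a₀) (h₁ : a₀ < rt₁) (h₂ : rt₁ < rt₂)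
    (hφ''neg : ∀ r : ℝ, rt₁ < r → deriv (deriv φ) r < 0)
    (hφ'''neg : ∀ r : ℝ, 0 < r → r < rt₂ → deriv (deriv (deriv φ)) r < 0)
    (hφ'''pos : ∀ r : ℝ, rt₂ < r → 0 < deriv (deriv (deriv φ)) r)
    (K N : ℤ) (hK : 2 ≤ K) (hN : K + 2 ≤ N)
    (ν : ℤ → ℤ) (hν : ∀ j ∈ Icc (-N) N, 1 ≤ ν j)
    (hν1 : ∀ j ∈ Icc (-K - 1) (K + 1), ν j = 1)
    (Φ : ℤ → ℝ) (rL rU : ℝ)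
    (hrL : rt₂ / 2 < rL) (hrLU : rL < rU)
    (hstab : 0 < deriv (deriv φ) rU + 21 * deriv (deriv φ) (2 * rL))
    (rp sp rn sn : ℤ → ℝ)
    (hrp : ∀ j ∈ Icc (-N) N, rp j ∈ Set.Ioo rL rU)
    (hsp : ∀ j ∈ Icc (-N) N, sp j ∈ Set.Ioo rL rU)
    (hrn : ∀ j ∈ Icc (-N) N, rn j ∈ Set.Ioo rL rU)
    (hsn : ∀ j ∈ Icc (-N) N, sn j ∈ Set.Ioo rL rU)
    (hrn_eq : ∀ j ∈ Icc (-N) N, psiQCE φ N K ν rn j + psiG φ N K ν rp j + Φ j = 0)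
    (hsn_eq : ∀ j ∈ Icc (-N) N, psiQCE φ N K ν sn j + psiG φ N K ν sp j + Φ j = 0) :
    ((Icc (-N) N).sup' (Finset.nonempty_Icc.mpr (by omega)) fun j => |rn j - sn j|) ≤
      (16 * |deriv (deriv φ) (2 * rL)| /
        (deriv (deriv φ) rU - 5 * |deriv (deriv φ) (2 * rL)|)) *
      ((Icc (-N) N).sup' (Finset.nonempty_Icc.mpr (by omega)) fun j => |rp j - sp j|) ∧
    16 * |deriv (deriv φ) (2 * rL)| /
      (deriv (deriv φ) rU - 5 * |deriv (deriv φ) (2 * rL)|) < 1 := by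
  have hrL0 : 0 < rL := by linarith
  have h2L : deriv (deriv φ) (2 * rL) < 0 := hφ''neg _ (by linarith)
  -- `hstab` forces `φ''(rU) > 0`, so `rU` lies below the inflection point `rt₁`.
  have hrU : rU ≤ rt₁ := not_lt.mp fun h => by linarith [hφ''neg rU h]
  have hgap : 16 * |deriv (deriv φ) (2 * rL)| <
      deriv (deriv φ) rU - 5 * |deriv (deriv φ) (2 * rL)| := by
    rw [abs_of_neg h2L]; linarith
  have hden : 0 < deriv (deriv φ) rU - 5 * |deriv (deriv φ) (2 * rL)| := by
    linarith [abs_nonneg (deriv (deriv φ) (2 * rL))]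
  have hIcc : ∀ z : ℤ → ℝ, (∀ j ∈ Icc (-N) N, z j ∈ Set.Ioo rL rU) →
      ∀ j ∈ Icc (-N) N, z j ∈ Set.Icc rL rU := fun z hz j hj => Set.Ioo_subset_Icc_self (hz j hj)
  refine ⟨?_, (div_lt_one hden).mpr hgap⟩
  rw [div_mul_eq_mul_div, le_div_iff₀ hden, mul_comm]
  exact qce_contraction_sup' hφC3 hrL0
    (fun z hz => (hφ'''neg z (by linarith [hz.1]) (by linarith [hz.2])).le)
    (fun z hz => (hφ'''pos z (by linarith [hz.1])).le) (hφ''neg _ (by linarith)).le hK hN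
    (fun j hj => by have := hν j hj; omega) hν1 (hIcc rp hrp) (hIcc sp hsp) (hIcc rn hrn)
    (hIcc sn hsn) hrn_eq hsn_eq _
end

section
/- The force-based quasicontinuum approximation is consistent: if r_j = r for all j = −N, …, N (a uniformly strained chain with spacing r > 0), then ψ^QCF_j(r, …, r) = −(φ'(r) + 2φ'(2r)) for every j = −N, …, N; in particular, ψ^QCF_j(r,…,r) has the same value for every representative atom j, regardless of whether j lies in the atomistic or continuum region. -/
open Finset

theorem Ifun_const_eq_zero (φ : ℝ → ℝ) (r : ℝ) (j : ℤ) : Ifun φ (fun _ => r) j = 0 := by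
  rw [Ifun, ← two_mul]
  ring

theorem stmt_3_general (φ : ℝ → ℝ)
    (K N : ℤ)
    (r : ℝ) :
    ∀ j ∈ Icc (-N) N,
      psiQCF φ K (fun _ => r) j = -(deriv φ r + 2 * deriv φ (2 * r)) := by
  intro j _
  simp only [psiQCF, Ifun_const_eq_zero, ← two_mul]
  split_ifs <;> ring

/-- The force-based quasicontinuum approximation is consistent: on a uniformly strained
chain with spacing `r > 0`, `ψ^QCF_j(r, …, r) = −(φ'(r) + 2φ'(2r))` for every
`j = −N, …, N`, the same value in the atomistic and continuum regions. -/
theorem stmt_3 (φ : ℝ → ℝ) (hφC1 : ContDiffOn ℝ 1 φ (Set.Ioi 0))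
    (K N : ℤ) (hK : 2 ≤ K) (hN : K + 2 ≤ N)
    (ν : ℤ → ℤ) (hν : ∀ j ∈ Icc (-N) N, 1 ≤ ν j)
    (hν1 : ∀ j ∈ Icc (-K - 1) (K + 1), ν j = 1)
    (r : ℝ) (hr : 0 < r) :
    ∀ j ∈ Icc (-N) N,
      psiQCF φ K (fun _ => r) j = -(deriv φ r + 2 * deriv φ (2 * r)) :=
  stmt_3_general φ K N r
end

section
/- The conjugate atomistic force on a representative atom is the hat-function-weighted average of the atomistic forces: for j = −N+1, …, N, F^CQC_j(z) := −∂E^CQC(z)/∂z_j = Σ_{i=0}^{ν_{j−1}} ((ν_{j−1} − i)/ν_{j−1}) F^a_{ℓ_j − i}(y(z)) + Σ_{i=1}^{ν_j} ((ν_j − i)/ν_j) F^a_{ℓ_j + i}(y(z)), where F^a_i(y) := −∂E^a(y)/∂y_i = [φ'(y_{i+1} − y_i) + φ'(y_{i+2} − y_i)] − [φ'(y_i − y_{i−1}) + φ'(y_i − y_{i−2})], with terms φ'(y_i − y_k) understood to be zero whenever i or k lies outside {−M, …, M+1}. -/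
open Finset

/-- Piecewise linear "shape" (hat) function of representative atom `j`, evaluated at the
reference site of atom `i` (expressed in lattice units, knots at the `ℓ_j`). -/
noncomputable def hatS (ℓ : ℤ → ℤ) (j i : ℤ) : ℝ :=
  if ℓ (j - 1) ≤ i ∧ i ≤ ℓ j then
    ((i - ℓ (j - 1) : ℤ) : ℝ) / ((ℓ j - ℓ (j - 1) : ℤ) : ℝ)
  else if ℓ j ≤ i ∧ i ≤ ℓ (j + 1) then
    ((ℓ (j + 1) - i : ℤ) : ℝ) / ((ℓ (j + 1) - ℓ j : ℤ) : ℝ)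
  else 0

/-- Interpolated atom positions `y_i(z) = Σ_j S_j(x_i) z_j`. -/
noncomputable def yInterp (N : ℤ) (ℓ : ℤ → ℤ) (z : ℤ → ℝ) (i : ℤ) : ℝ :=
  ∑ j ∈ Icc (-N) (N + 1), hatS ℓ j i * z j

/-- The second-neighbor atomistic energy
`E^a(y) = Σ_{i=−M}^{M} φ(y_{i+1} − y_i) + Σ_{i=−M}^{M−1} φ(y_{i+2} − y_i)`. -/
noncomputable def Eatom (φ : ℝ → ℝ) (M : ℤ) (y : ℤ → ℝ) : ℝ :=
  (∑ i ∈ Icc (-M) M, φ (y (i + 1) - y i)) + ∑ i ∈ Icc (-M) (M - 1), φ (y (i + 2) - y i)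

/-- The constrained quasicontinuum energy `E^CQC(z) := E^a(y(z))`. -/
noncomputable def ECQC (φ : ℝ → ℝ) (M N : ℤ) (ℓ : ℤ → ℤ) (z : ℤ → ℝ) : ℝ :=
  Eatom φ M (yInterp N ℓ z)

/-- The conjugate force `F^CQC_j(z) := −∂E^CQC(z)/∂z_j`. -/
noncomputable def FCQC (φ : ℝ → ℝ) (M N : ℤ) (ℓ : ℤ → ℤ) (z : ℤ → ℝ) (j : ℤ) : ℝ :=
  -deriv (fun t => ECQC φ M N ℓ (Function.update z j t)) (z j)

/-- The atomistic force `F^a_i(y) := −∂E^a(y)/∂y_i`, with terms `φ'(y_i − y_k)` set to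
zero whenever `i` or `k` lies outside `{−M, …, M+1}`. -/
noncomputable def Fa (φ : ℝ → ℝ) (M : ℤ) (y : ℤ → ℝ) (i : ℤ) : ℝ :=
  ((if (-M ≤ i ∧ i ≤ M + 1) ∧ (-M ≤ i + 1 ∧ i + 1 ≤ M + 1) then
      deriv φ (y (i + 1) - y i) else 0) +
   (if (-M ≤ i ∧ i ≤ M + 1) ∧ (-M ≤ i + 2 ∧ i + 2 ≤ M + 1) then
      deriv φ (y (i + 2) - y i) else 0)) -
  ((if (-M ≤ i ∧ i ≤ M + 1) ∧ (-M ≤ i - 1 ∧ i - 1 ≤ M + 1) then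
      deriv φ (y i - y (i - 1)) else 0) +
   (if (-M ≤ i ∧ i ≤ M + 1) ∧ (-M ≤ i - 2 ∧ i - 2 ≤ M + 1) then
      deriv φ (y i - y (i - 2)) else 0))

/-!
Moving the representative atom `j` moves the interpolated chain along the line
`y + (t - z_j) S_j`, where `S_j` is the hat function of `j`. Since `z` is increasing, so is `y`,
hence every bond length is positive and `φ` is differentiable there; the chain rule gives
`-∂E^CQC/∂z_j = -Σ_bonds φ'(bond length) · (stretch of the bond under S_j)`. Summation by
parts regroups this sum atom by atom as `Σ_i S_j(i) F^a_i(y)`, and `S_j` is supported on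
`[ℓ_{j-1}, ℓ_{j+1}]`, where its values are the weights `(ν - i)/ν`.
-/

lemma exists_mem_Icc_le_lt_succ {α : Type*} [LinearOrder α] {f : ℤ → α} {a b : ℤ} {x : α}
    (hab : a ≤ b) (ha : f a ≤ x) (hb : x < f (b + 1)) :
    ∃ j ∈ Icc a b, f j ≤ x ∧ x < f (j + 1) := by
  induction b, hab using Int.leInduction with
  | base => exact ⟨a, by simp, ha, hb⟩
  | succ b hab ih =>
    by_cases hx : x < f (b + 1)
    · obtain ⟨j, hj, hfj⟩ := ih hx
      exact ⟨j, by simp only [mem_Icc] at hj ⊢; omega, hfj⟩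
    · exact ⟨b + 1, by simp only [mem_Icc]; omega, not_lt.1 hx, hb⟩

section HatFunction

variable {ℓ : ℤ → ℤ} {k i : ℤ}

lemma hatS_of_le_of_le (h₁ : ℓ (k - 1) ≤ i) (h₂ : i ≤ ℓ k) :
    hatS ℓ k i = ((i - ℓ (k - 1) : ℤ) : ℝ) / ((ℓ k - ℓ (k - 1) : ℤ) : ℝ) :=
  if_pos ⟨h₁, h₂⟩

lemma hatS_of_lt_of_le (h₁ : ℓ k < i) (h₂ : i ≤ ℓ (k + 1)) :
    hatS ℓ k i = ((ℓ (k + 1) - i : ℤ) : ℝ) / ((ℓ (k + 1) - ℓ k : ℤ) : ℝ) := by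
  rw [hatS, if_neg (by omega), if_pos ⟨h₁.le, h₂⟩]

lemma hatS_self (h : ℓ (k - 1) < ℓ k) : hatS ℓ k (ℓ k) = 1 := by
  rw [hatS_of_le_of_le h.le le_rfl, div_self]
  exact_mod_cast (by omega : ℓ k - ℓ (k - 1) ≠ 0)

lemma hatS_eq_zero (h₁ : ℓ (k - 1) < ℓ k) (h₂ : ℓ k < ℓ (k + 1))
    (hi : i ≤ ℓ (k - 1) ∨ ℓ (k + 1) ≤ i) : hatS ℓ k i = 0 := by
  unfold hatS
  split_ifs with hA hB
  · rw [show i = ℓ (k - 1) by omega, sub_self, Int.cast_zero, zero_div]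
  · rw [show i = ℓ (k + 1) by omega, sub_self, Int.cast_zero, zero_div]
  · rfl

lemma sum_hatS_mul (F : ℤ → ℝ) (h₁ : ℓ (k - 1) < ℓ k) (h₂ : ℓ k < ℓ (k + 1)) {a b : ℤ}
    (ha : a ≤ ℓ (k - 1)) (hb : ℓ (k + 1) ≤ b) :
    ∑ i ∈ Icc a b, hatS ℓ k i * F i =
      (∑ i ∈ Icc (0 : ℤ) (ℓ k - ℓ (k - 1)),
          ((ℓ k - ℓ (k - 1) - i : ℤ) : ℝ) / ((ℓ k - ℓ (k - 1) : ℤ) : ℝ) * F (ℓ k - i)) +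
        ∑ i ∈ Icc (1 : ℤ) (ℓ (k + 1) - ℓ k),
          ((ℓ (k + 1) - ℓ k - i : ℤ) : ℝ) / ((ℓ (k + 1) - ℓ k : ℤ) : ℝ) * F (ℓ k + i) := by
  have hsupp : Icc (ℓ (k - 1)) (ℓ k) ∪ Ioc (ℓ k) (ℓ (k + 1)) ⊆ Icc a b := by
    intro x hx
    simp only [mem_union, mem_Icc, mem_Ioc] at hx ⊢
    omega
  have hdisj : Disjoint (Icc (ℓ (k - 1)) (ℓ k)) (Ioc (ℓ k) (ℓ (k + 1))) :=
    disjoint_left.2 fun x hx hx' => by simp only [mem_Icc, mem_Ioc] at hx hx'; omega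
  rw [← sum_subset hsupp, sum_union hdisj]
  · congr 1
    · refine (sum_nbij' (fun i => ℓ k - i) (fun i => ℓ k - i) ?_ ?_ (fun _ _ => by ring)
        (fun _ _ => by ring) fun i hi => ?_).symm
      · intro x hx; simp only [mem_Icc] at hx ⊢; omega
      · intro x hx; simp only [mem_Icc] at hx ⊢; omega
      · simp only [mem_Icc] at hi
        rw [hatS_of_le_of_le (by omega) (by omega),
          show ℓ k - i - ℓ (k - 1) = ℓ k - ℓ (k - 1) - i by ring]
    · refine (sum_nbij' (fun i => ℓ k + i) (fun i => i - ℓ k) ?_ ?_ (fun _ _ => by ring)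
        (fun _ _ => by ring) fun i hi => ?_).symm
      · intro x hx; simp only [mem_Icc, mem_Ioc] at hx ⊢; omega
      · intro x hx; simp only [mem_Icc, mem_Ioc] at hx ⊢; omega
      · simp only [mem_Icc] at hi
        rw [hatS_of_lt_of_le (by omega) (by omega),
          show ℓ (k + 1) - (ℓ k + i) = ℓ (k + 1) - ℓ k - i by ring]
  · intro x _ hx
    simp only [mem_union, mem_Icc, mem_Ioc] at hx
    rw [hatS_eq_zero h₁ h₂ (by omega), zero_mul]

end HatFunction

section Interpolation

variable {N : ℤ} {ℓ : ℤ → ℤ} {z : ℤ → ℝ}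

lemma yInterp_update {j : ℤ} (hj : j ∈ Icc (-N) (N + 1)) (t : ℝ) :
    yInterp N ℓ (Function.update z j t) = yInterp N ℓ z + (t - z j) • hatS ℓ j := by
  ext i
  have hrest : ∀ k ∈ (Icc (-N) (N + 1)).erase j,
      hatS ℓ k i * Function.update z j t k = hatS ℓ k i * z k := fun k hk => by
    rw [Function.update_of_ne (ne_of_mem_erase hk)]
  simp only [yInterp, Pi.add_apply, Pi.smul_apply, smul_eq_mul]
  rw [← add_sum_erase _ _ hj, ← add_sum_erase _ _ hj, sum_congr rfl hrest,
    Function.update_self]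
  ring

lemma yInterp_eq_of_mem_segment (hℓ : StrictMonoOn ℓ (Set.Icc (-N - 1) (N + 2))) {j i : ℤ}
    (hj : j ∈ Icc (-N) N) (h₁ : ℓ j ≤ i) (h₂ : i ≤ ℓ (j + 1)) :
    yInterp N ℓ z i =
      z j + ((i - ℓ j : ℤ) : ℝ) / ((ℓ (j + 1) - ℓ j : ℤ) : ℝ) * (z (j + 1) - z j) := by
  rw [mem_Icc] at hj
  have hlt : ∀ a b, -N - 1 ≤ a → b ≤ N + 2 → a < b → ℓ a < ℓ b := fun a b ha hb hab =>
    hℓ ⟨ha, by omega⟩ ⟨by omega, hb⟩ hab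
  have hle : ∀ a b, -N - 1 ≤ a → b ≤ N + 2 → a ≤ b → ℓ a ≤ ℓ b := fun a b ha hb hab =>
    hℓ.monotoneOn ⟨ha, by omega⟩ ⟨by omega, hb⟩ hab
  have hν : ((ℓ (j + 1) - ℓ j : ℤ) : ℝ) ≠ 0 := by
    exact_mod_cast (by have := hlt j (j + 1) (by omega) (by omega) (by omega); omega :
      ℓ (j + 1) - ℓ j ≠ 0)
  have hleft : hatS ℓ j i = 1 - ((i - ℓ j : ℤ) : ℝ) / ((ℓ (j + 1) - ℓ j : ℤ) : ℝ) := by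
    rcases h₁.eq_or_lt with rfl | h₁
    · rw [hatS_self (hlt _ _ (by omega) (by omega) (by omega)), sub_self, Int.cast_zero,
        zero_div, sub_zero]
    · rw [hatS_of_lt_of_le h₁ h₂]
      field_simp
      push_cast
      ring
  have hright : hatS ℓ (j + 1) i = ((i - ℓ j : ℤ) : ℝ) / ((ℓ (j + 1) - ℓ j : ℤ) : ℝ) := by
    rw [hatS_of_le_of_le (by rwa [add_sub_cancel_right]) h₂, add_sub_cancel_right]
  have hothers : ∀ k ∈ Icc (-N) (N + 1), k ≠ j ∧ k ≠ j + 1 → hatS ℓ k i * z k = 0 := by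
    intro k hk hkj
    rw [mem_Icc] at hk
    have hsupp : i ≤ ℓ (k - 1) ∨ ℓ (k + 1) ≤ i := by
      rcases lt_or_gt_of_ne hkj.1 with hk' | hk'
      · exact .inr (by have := hle (k + 1) j (by omega) (by omega) (by omega); omega)
      · exact .inl (by have := hle (j + 1) (k - 1) (by omega) (by omega) (by omega); omega)
    rw [hatS_eq_zero (hlt _ _ (by omega) (by omega) (by omega))
      (hlt _ _ (by omega) (by omega) (by omega)) hsupp, zero_mul]
  rw [yInterp, sum_eq_add_of_mem j (j + 1) (by simp only [mem_Icc]; omega)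
    (by simp only [mem_Icc]; omega) (by omega) hothers, hleft, hright]
  ring

lemma strictMonoOn_yInterp (hℓ : StrictMonoOn ℓ (Set.Icc (-N - 1) (N + 2))) (hN : -N ≤ N)
    (hz : ∀ j ∈ Icc (-N) N, z j < z (j + 1)) :
    StrictMonoOn (yInterp N ℓ z) (Set.Icc (ℓ (-N)) (ℓ (N + 1))) := by
  refine strictMonoOn_of_lt_add_one Set.ordConnected_Icc fun i _ hi hi' => ?_
  obtain ⟨j, hj, h₁, h₂⟩ := exists_mem_Icc_le_lt_succ hN hi.1 (Int.add_one_le_iff.1 hi'.2)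
  rw [yInterp_eq_of_mem_segment hℓ hj h₁ h₂.le,
    yInterp_eq_of_mem_segment hℓ hj (by omega) (Int.add_one_le_iff.2 h₂)]
  have hν : (0 : ℝ) < ((ℓ (j + 1) - ℓ j : ℤ) : ℝ) := by
    exact_mod_cast (by omega : 0 < ℓ (j + 1) - ℓ j)
  have hzj := sub_pos.2 (hz j hj)
  gcongr
  exact lt_add_one i

end Interpolation

lemma sum_mul_sub_shift {R : Type*} [CommRing R] {a c d : ℤ} (hd : 0 ≤ d) {f : ℤ → R}
    (hf : ∀ i ∉ Icc a (c - d), f i = 0) (v : ℤ → R) :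
    ∑ i ∈ Icc a c, v i * (f i - f (i - d)) = -∑ i ∈ Icc a (c - d), f i * (v (i + d) - v i) := by
  have hzero : ∀ g : ℤ → R, ∀ i ∉ Icc a (c - d), g i * f i = 0 := fun g i hi => by
    rw [hf i hi, mul_zero]
  have hshift : ∑ i ∈ Icc a c, v i * f (i - d) = ∑ i ∈ Icc a (c - d), v (i + d) * f i := by
    rw [show Icc a c = (Icc (a - d) (c - d)).map (addRightEmbedding d) by simp, sum_map]
    simp only [addRightEmbedding_apply, add_sub_cancel_right]
    exact (sum_subset (Icc_subset_Icc (by omega) le_rfl) fun i _ hi =>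
      hzero (fun i => v (i + d)) i hi).symm
  have hcut : ∑ i ∈ Icc a c, v i * f i = ∑ i ∈ Icc a (c - d), v i * f i :=
    (sum_subset (Icc_subset_Icc le_rfl (by omega)) fun i _ hi => hzero v i hi).symm
  simp only [mul_sub]
  rw [sum_sub_distrib, hcut, hshift, ← sum_sub_distrib, ← sum_neg_distrib]
  exact sum_congr rfl fun i _ => by ring

noncomputable def bondForce (φ : ℝ → ℝ) (M : ℤ) (y : ℤ → ℝ) (k i : ℤ) : ℝ :=
  if -M ≤ i ∧ i + k ≤ M + 1 then deriv φ (y (i + k) - y i) else 0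

lemma Fa_eq_bondForce (φ : ℝ → ℝ) (M : ℤ) (y : ℤ → ℝ) (i : ℤ) :
    Fa φ M y i = (bondForce φ M y 1 i - bondForce φ M y 1 (i - 1)) +
      (bondForce φ M y 2 i - bondForce φ M y 2 (i - 2)) := by
  simp only [Fa, bondForce, sub_add_cancel, add_sub_add_comm]
  congr 1 <;> congr 1 <;> exact if_congr (by omega) rfl rfl

lemma hasDerivAt_comp_add_sub_mul {f : ℝ → ℝ} {a : ℝ} (hf : DifferentiableAt ℝ f a) (s c : ℝ) :
    HasDerivAt (fun t => f (a + (t - s) * c)) (deriv f a * c) s :=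
  hf.hasDerivAt.comp_of_eq s
    (by simpa using ((hasDerivAt_id' s).sub_const s |>.mul_const c).const_add a) (by simp)

section Energy

variable {φ : ℝ → ℝ} {M : ℤ} {y : ℤ → ℝ}

lemma hasDerivAt_sum_bond (hφ : DifferentiableOn ℝ φ (Set.Ioi 0))
    (hy : StrictMonoOn y (Set.Icc (-M) (M + 1))) {k : ℤ} (hk : 0 < k) (v : ℤ → ℝ) (s : ℝ) :
    HasDerivAt
      (fun t : ℝ => ∑ i ∈ Icc (-M) (M + 1 - k),
        φ ((y + (t - s) • v) (i + k) - (y + (t - s) • v) i))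
      (-∑ i ∈ Icc (-M) (M + 1), v i * (bondForce φ M y k i - bondForce φ M y k (i - k))) s := by
  have hsupp : ∀ i ∉ Icc (-M) (M + 1 - k), bondForce φ M y k i = 0 := fun i hi => by
    rw [mem_Icc] at hi
    exact if_neg (by omega)
  rw [sum_mul_sub_shift hk.le hsupp, neg_neg]
  refine HasDerivAt.fun_sum fun i hi => ?_
  rw [mem_Icc] at hi
  have hstretch : 0 < y (i + k) - y i :=
    sub_pos.2 (hy ⟨hi.1, by omega⟩ ⟨by omega, by omega⟩ (by omega))
  rw [bondForce, if_pos (by omega)]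
  have hline : (fun t : ℝ => φ ((y + (t - s) • v) (i + k) - (y + (t - s) • v) i)) =
      fun t => φ (y (i + k) - y i + (t - s) * (v (i + k) - v i)) := by
    funext t
    simp only [Pi.add_apply, Pi.smul_apply, smul_eq_mul]
    congr 1
    ring
  rw [hline]
  exact hasDerivAt_comp_add_sub_mul (hφ.differentiableAt (Ioi_mem_nhds hstretch)) _ _

theorem hasDerivAt_Eatom_add_smul (hφ : DifferentiableOn ℝ φ (Set.Ioi 0))
    (hy : StrictMonoOn y (Set.Icc (-M) (M + 1))) (v : ℤ → ℝ) (s : ℝ) :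
    HasDerivAt (fun t : ℝ => Eatom φ M (y + (t - s) • v))
      (-∑ i ∈ Icc (-M) (M + 1), v i * Fa φ M y i) s := by
  have h₁ := hasDerivAt_sum_bond hφ hy one_pos v s
  have h₂ := hasDerivAt_sum_bond hφ hy two_pos v s
  rw [add_sub_cancel_right] at h₁
  rw [show M + 1 - 2 = M - 1 by ring] at h₂
  refine (h₁.add h₂).congr_deriv ?_
  simp only [Fa_eq_bondForce, mul_add, sum_add_distrib, neg_add]

end Energy

theorem stmt_6_general (φ : ℝ → ℝ) (hφC1 : ContDiffOn ℝ 1 φ (Set.Ioi 0))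
    (M N : ℤ) (ℓ : ℤ → ℤ)
    (hℓmono : ∀ j : ℤ, -N - 1 ≤ j → j ≤ N + 1 → ℓ j < ℓ (j + 1))
    (hℓl : ℓ (-N) = -M) (hℓr : ℓ (N + 1) = M + 1)
    (z : ℤ → ℝ) (hz : ∀ j ∈ Icc (-N) N, z j < z (j + 1)) :
    ∀ j ∈ Icc (-N + 1) N,
      FCQC φ M N ℓ z j =
        (∑ i ∈ Icc (0 : ℤ) (ℓ j - ℓ (j - 1)),
            ((ℓ j - ℓ (j - 1) - i : ℤ) : ℝ) / ((ℓ j - ℓ (j - 1) : ℤ) : ℝ) *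
              Fa φ M (yInterp N ℓ z) (ℓ j - i)) +
        ∑ i ∈ Icc (1 : ℤ) (ℓ (j + 1) - ℓ j),
            ((ℓ (j + 1) - ℓ j - i : ℤ) : ℝ) / ((ℓ (j + 1) - ℓ j : ℤ) : ℝ) *
              Fa φ M (yInterp N ℓ z) (ℓ j + i) := by
  intro j hj
  rw [mem_Icc] at hj
  have hℓ : StrictMonoOn ℓ (Set.Icc (-N - 1) (N + 2)) :=
    strictMonoOn_of_lt_add_one Set.ordConnected_Icc fun a _ ha ha' =>
      hℓmono a ha.1 (by have := ha'.2; omega)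
  have hy : StrictMonoOn (yInterp N ℓ z) (Set.Icc (-M) (M + 1)) := by
    simpa only [hℓl, hℓr] using strictMonoOn_yInterp hℓ (by omega) hz
  have hline : ∀ t, ECQC φ M N ℓ (Function.update z j t) =
      Eatom φ M (yInterp N ℓ z + (t - z j) • hatS ℓ j) := fun t => by
    rw [ECQC, yInterp_update (by simp only [mem_Icc]; omega)]
  have hderiv :=
    hasDerivAt_Eatom_add_smul (hφC1.differentiableOn one_ne_zero) hy (hatS ℓ j) (z j)
  rw [FCQC, funext hline, hderiv.deriv, neg_neg]
  have hℓ_pred : ℓ (j - 1) < ℓ j := hℓ ⟨by omega, by omega⟩ ⟨by omega, by omega⟩ (by omega)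
  have hℓ_succ : ℓ j < ℓ (j + 1) := hℓ ⟨by omega, by omega⟩ ⟨by omega, by omega⟩ (by omega)
  have hleft : -M ≤ ℓ (j - 1) :=
    hℓl ▸ hℓ.monotoneOn ⟨by omega, by omega⟩ ⟨by omega, by omega⟩ (by omega)
  have hright : ℓ (j + 1) ≤ M + 1 :=
    hℓr ▸ hℓ.monotoneOn ⟨by omega, by omega⟩ ⟨by omega, by omega⟩ (by omega)
  exact sum_hatS_mul _ hℓ_pred hℓ_succ hleft hright

/-- The conjugate atomistic force on a representative atom is the hat-function-weighted
average of the atomistic forces: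
`F^CQC_j(z) = Σ_{i=0}^{ν_{j−1}} ((ν_{j−1}−i)/ν_{j−1}) F^a_{ℓ_j−i}(y(z))
            + Σ_{i=1}^{ν_j} ((ν_j−i)/ν_j) F^a_{ℓ_j+i}(y(z))` for `j = −N+1, …, N`. -/
theorem stmt_6 (φ : ℝ → ℝ) (hφC1 : ContDiffOn ℝ 1 φ (Set.Ioi 0))
    (M N : ℤ) (hN : 1 ≤ N) (ℓ : ℤ → ℤ)
    (hℓmono : ∀ j : ℤ, -N - 1 ≤ j → j ≤ N + 1 → ℓ j < ℓ (j + 1))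
    (hℓl : ℓ (-N) = -M) (hℓr : ℓ (N + 1) = M + 1)
    (z : ℤ → ℝ) (hz : ∀ j ∈ Icc (-N) N, z j < z (j + 1)) :
    ∀ j ∈ Icc (-N + 1) N,
      FCQC φ M N ℓ z j =
        (∑ i ∈ Icc (0 : ℤ) (ℓ j - ℓ (j - 1)),
            ((ℓ j - ℓ (j - 1) - i : ℤ) : ℝ) / ((ℓ j - ℓ (j - 1) : ℤ) : ℝ) *
              Fa φ M (yInterp N ℓ z) (ℓ j - i)) +
        ∑ i ∈ Icc (1 : ℤ) (ℓ (j + 1) - ℓ j),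
            ((ℓ (j + 1) - ℓ j - i : ℤ) : ℝ) / ((ℓ (j + 1) - ℓ j : ℤ) : ℝ) *
              Fa φ M (yInterp N ℓ z) (ℓ j + i) :=
  stmt_6_general φ hφC1 M N ℓ hℓmono hℓl hℓr z hz
end

section
/- The work-per-unit-parameter function of the continuation algorithm is strictly decreasing in the step size: for any ε > 0, k > 0, and 0 < α < 1, the function W(h) := ln(ε/(ε + k h)) / (h ln α) is strictly decreasing on (0, ∞). -/
/-! `W(h)` is a positive multiple of the slope of the secant of `log` between `ε` and
`ε + k h`, and secant slopes of a strictly concave function decrease as the moving endpoint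
increases. -/

open Real Set

theorem StrictConcaveOn.strictAntiOn_secant_add_mul {𝕜 : Type*} [Field 𝕜] [LinearOrder 𝕜]
    [IsStrictOrderedRing 𝕜] {s : Set 𝕜} {f : 𝕜 → 𝕜} (hf : StrictConcaveOn 𝕜 s f) {a k : 𝕜}
    (ha : a ∈ s) (hk : 0 < k) (hs : ∀ h, 0 < h → a + k * h ∈ s) :
    StrictAntiOn (fun h => (f (a + k * h) - f a) / h) (Ioi 0) := by
  intro x (hx : 0 < x) y (hy : 0 < y) hxy
  have hslope := hf.secant_strict_mono ha (hs x hx) (hs y hy)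
    (by simp [hk.ne', hx.ne']) (by simp [hk.ne', hy.ne']) (by gcongr)
  simp only [add_sub_cancel_left, div_mul_eq_div_div_swap] at hslope
  exact (div_lt_div_iff_of_pos_right hk).mp hslope

theorem strictAntiOn_log_add_mul_sub_log_div {ε k : ℝ} (hε : 0 < ε) (hk : 0 < k) :
    StrictAntiOn (fun h => (log (ε + k * h) - log ε) / h) (Ioi 0) :=
  strictConcaveOn_log_Ioi.strictAntiOn_secant_add_mul hε hk fun h hh =>
    show 0 < ε + k * h by positivity

theorem log_div_add_mul_div_mul_log {ε k α h : ℝ} (hε : 0 < ε) (hεkh : 0 < ε + k * h) :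
    log (ε / (ε + k * h)) / (h * log α) = (log (ε + k * h) - log ε) / h / -log α := by
  rw [log_div hε.ne' hεkh.ne', ← neg_sub, div_div, mul_neg, div_neg, neg_div]

/-- The work-per-unit-parameter function `W(h) = ln(ε/(ε + k h)) / (h ln α)` of the
continuation algorithm is strictly decreasing in the step size `h` on `(0, ∞)`. -/
theorem stmt_12 (ε k α : ℝ) (hε : 0 < ε) (hk : 0 < k) (hα0 : 0 < α) (hα1 : α < 1) :
    StrictAntiOn (fun h : ℝ => Real.log (ε / (ε + k * h)) / (h * Real.log α))
      (Set.Ioi (0 : ℝ)) := by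
  have hlogα : 0 < -log α := neg_pos.mpr (log_neg hα0 hα1)
  intro x (hx : 0 < x) y (hy : 0 < y) hxy
  simp only [log_div_add_mul_div_mul_log hε (by positivity : 0 < ε + k * x),
    log_div_add_mul_div_mul_log hε (by positivity : 0 < ε + k * y)]
  exact div_lt_div_of_pos_right (strictAntiOn_log_add_mul_sub_log_div hε hk hx hy hxy) hlogα
end

section
/- With uniform step size h = 1/Q (Q a positive integer), load steps s_q := q h, step-size restriction k h + ε ≤ δ, and a number of iterations P ∈ ℕ satisfying α^P (k h + ε) ≤ ε, the continuation iterates defined by z_0 ∈ ℝⁿ with ‖z(0) − z_0‖ ≤ ε and z_q := T_{s_q}^P z_{q−1} (P-fold composition) for q = 1, …, Q satisfy ‖z(s_q) − z_q‖ ≤ ε for every q = 0, …, Q. -/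
/-!
Each `T_s` pulls every point of the `δ`-ball around its fixed point `z(s)` towards `z(s)` by the
factor `α`. Along the path, `z` moves by at most `k h` between consecutive load steps, so the
start `z_{q-1}` of step `q` lies within `k h + ε ≤ δ` of `z(s_q)`; after `P` iterations it lies
within `α^P (k h + ε) ≤ ε` of `z(s_q)`, and induction on `q` concludes.
-/

theorem norm_iterate_sub_fixedPoint_le {E : Type*} [SeminormedAddCommGroup E]
    {T : E → E} {x p : E} {α δ r : ℝ} (hα0 : 0 ≤ α) (hα1 : α ≤ 1) (hr : r ≤ δ)
    (hfix : T x = x)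
    (hT : ∀ y y', ‖y - x‖ ≤ δ → ‖y' - x‖ ≤ δ → ‖T y - T y'‖ ≤ α * ‖y - y'‖)
    (hp : ‖p - x‖ ≤ r) :
    ∀ m : ℕ, ‖T^[m] p - x‖ ≤ α ^ m * r
  | 0 => by simpa using hp
  | m + 1 => by
    have ih := norm_iterate_sub_fixedPoint_le hα0 hα1 hr hfix hT hp m
    have hr0 : 0 ≤ r := (norm_nonneg _).trans hp
    have hball : ‖T^[m] p - x‖ ≤ δ :=
      ih.trans <| (mul_le_of_le_one_left hr0 (pow_le_one₀ hα0 hα1)).trans hr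
    have hcenter : ‖x - x‖ ≤ δ := by simpa using hr0.trans hr
    rw [Function.iterate_succ_apply']
    calc ‖T (T^[m] p) - x‖ ≤ α * ‖T^[m] p - x‖ := by
          simpa only [hfix] using hT _ _ hball hcenter
      _ ≤ α * (α ^ m * r) := by gcongr
      _ = α ^ (m + 1) * r := by ring

theorem stmt_13_general (n : ℕ) (z : ℝ → (Fin n → ℝ)) (k α δ ε : ℝ)
    (hα0 : 0 < α) (hα1 : α < 1)
    (hz : ∀ s t : ℝ, 0 ≤ s → s ≤ t → t ≤ 1 → ‖z t - z s‖ ≤ k * (t - s))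
    (T : ℝ → (Fin n → ℝ) → (Fin n → ℝ))
    (hTfix : ∀ s : ℝ, 0 ≤ s → s ≤ 1 → T s (z s) = z s)
    (hTcontr : ∀ s : ℝ, 0 ≤ s → s ≤ 1 → ∀ p q : Fin n → ℝ,
      ‖p - z s‖ ≤ δ → ‖q - z s‖ ≤ δ → ‖T s p - T s q‖ ≤ α * ‖p - q‖)
    (Q : ℕ) (h : ℝ) (hh : h = 1 / (Q : ℝ))
    (hstep : k * h + ε ≤ δ)
    (P : ℕ) (hP : α ^ P * (k * h + ε) ≤ ε)
    (w : ℕ → (Fin n → ℝ)) (hw0 : ‖z 0 - w 0‖ ≤ ε)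
    (hwrec : ∀ q : ℕ, 1 ≤ q → q ≤ Q → w q = (T ((q : ℝ) * h))^[P] (w (q - 1))) :
    ∀ q : ℕ, q ≤ Q → ‖z ((q : ℝ) * h) - w q‖ ≤ ε := by
  have hh0 : 0 ≤ h := hh ▸ by positivity
  intro q
  induction q with
  | zero => simpa using hw0
  | succ q ih =>
    intro hq
    have hwq : w (q + 1) = (T ((q : ℝ) * h + h))^[P] (w q) := by
      simpa [add_one_mul] using hwrec (q + 1) (by omega) hq
    rw [hwq, Nat.cast_succ, add_one_mul, norm_sub_rev]
    have hs0 : 0 ≤ (q : ℝ) * h + h := by positivity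
    have hs1 : (q : ℝ) * h + h ≤ 1 := by
      rw [← add_one_mul, hh, mul_one_div]
      exact div_le_one_of_le₀ (by exact_mod_cast hq) (Nat.cast_nonneg Q)
    have hdrift : ‖z ((q : ℝ) * h + h) - z ((q : ℝ) * h)‖ ≤ k * h := by
      simpa using hz ((q : ℝ) * h) _ (by positivity) (by linarith) hs1
    have hstart : ‖w q - z ((q : ℝ) * h + h)‖ ≤ k * h + ε := by
      rw [norm_sub_rev]
      linarith [norm_sub_le_norm_sub_add_norm_sub (z ((q : ℝ) * h + h)) (z ((q : ℝ) * h)) (w q),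
        ih (by omega)]
    exact (norm_iterate_sub_fixedPoint_le hα0.le hα1.le hstep (hTfix _ hs0 hs1)
      (hTcontr _ hs0 hs1) hstart P).trans hP

/-- Continuation with uniform step size `h = 1/Q`, load steps `s_q = q h`, step-size
restriction `k h + ε ≤ δ`, and `P` iterations per step with `α^P (k h + ε) ≤ ε`:
the iterates `z_q = T_{s_q}^P z_{q−1}` stay within distance `ε` (in the maximum norm on
`ℝⁿ`, i.e. the sup norm on `Fin n → ℝ`) of the exact solution path `z(s_q)`. -/
theorem stmt_13 (n : ℕ) (hn : 1 ≤ n) (z : ℝ → (Fin n → ℝ)) (k α δ ε : ℝ)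
    (hk : 0 < k) (hα0 : 0 < α) (hα1 : α < 1) (hδ : 0 < δ) (hε : 0 < ε) (hεδ : ε ≤ δ)
    (hz : ∀ s t : ℝ, 0 ≤ s → s ≤ t → t ≤ 1 → ‖z t - z s‖ ≤ k * (t - s))
    (T : ℝ → (Fin n → ℝ) → (Fin n → ℝ))
    (hTfix : ∀ s : ℝ, 0 ≤ s → s ≤ 1 → T s (z s) = z s)
    (hTcontr : ∀ s : ℝ, 0 ≤ s → s ≤ 1 → ∀ p q : Fin n → ℝ,
      ‖p - z s‖ ≤ δ → ‖q - z s‖ ≤ δ → ‖T s p - T s q‖ ≤ α * ‖p - q‖)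
    (Q : ℕ) (hQ : 0 < Q) (h : ℝ) (hh : h = 1 / (Q : ℝ))
    (hstep : k * h + ε ≤ δ)
    (P : ℕ) (hP : α ^ P * (k * h + ε) ≤ ε)
    (w : ℕ → (Fin n → ℝ)) (hw0 : ‖z 0 - w 0‖ ≤ ε)
    (hwrec : ∀ q : ℕ, 1 ≤ q → q ≤ Q → w q = (T ((q : ℝ) * h))^[P] (w (q - 1))) :
    ∀ q : ℕ, q ≤ Q → ‖z ((q : ℝ) * h) - w q‖ ≤ ε :=
  stmt_13_general n z k α δ ε hα0 hα1 hz T hTfix hTcontr Q h hh hstep P hP w hw0 hwrec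
end

section
/- Suppose in addition that the continuous piecewise linear interpolant Iz of the exact values z(s_q) at the nodes s_q (q = 0, …, Q) satisfies max_{s ∈ [0,1]} ‖z(s) − (Iz)(s)‖ ≤ ε. Then the continuous piecewise linear interpolant z̃ of the computed values z_q at the nodes s_q satisfies max_{s ∈ [0,1]} ‖z(s) − z̃(s)‖ ≤ 2ε. -/
/-!
At the nodes the computed values are within `ε` of the exact ones: if `z_{q-1}` is `ε`-close to
`z(s_{q-1})`, it is `(k h + ε)`-close to `z(s_q)`, hence lies in the ball of radius `δ` where
`T_{s_q}` contracts towards its fixed point `z(s_q)`, and `P` iterations shrink the error by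
`α^P` back below `ε`. Linear interpolation is a convex combination of the two node values, so
it moves by at most `ε` when both node values do; add the interpolation error `ε` of `Iz`.
-/

section Continuation

variable {E : Type*} [SeminormedAddCommGroup E]

theorem norm_iterate_sub_le_of_contracting_towards {f : E → E} {x : E} {α δ : ℝ}
    (hα0 : 0 ≤ α) (hα1 : α ≤ 1) (hf : ∀ p, ‖p - x‖ ≤ δ → ‖f p - x‖ ≤ α * ‖p - x‖)
    (j : ℕ) {p : E} (hp : ‖p - x‖ ≤ δ) : ‖f^[j] p - x‖ ≤ α ^ j * ‖p - x‖ := by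
  induction j with
  | zero => simp
  | succ j ih =>
    have hball : ‖f^[j] p - x‖ ≤ δ :=
      ih.trans (mul_le_of_le_one_left (norm_nonneg _) (pow_le_one₀ hα0 hα1) |>.trans hp)
    rw [Function.iterate_succ_apply', pow_succ', mul_assoc]
    exact (hf _ hball).trans (mul_le_mul_of_nonneg_left ih hα0)

theorem norm_sub_iterate_le_of_near_fixedPoint {f : E → E} {x x' p : E} {α δ ε d : ℝ} {P : ℕ}
    (hα0 : 0 ≤ α) (hα1 : α ≤ 1) (hfix : f x' = x')
    (hf : ∀ p q, ‖p - x'‖ ≤ δ → ‖q - x'‖ ≤ δ → ‖f p - f q‖ ≤ α * ‖p - q‖)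
    (hx : ‖x' - x‖ ≤ d) (hp : ‖x - p‖ ≤ ε) (hδ : d + ε ≤ δ) (hP : α ^ P * (d + ε) ≤ ε) :
    ‖x' - f^[P] p‖ ≤ ε := by
  have hdist : ‖p - x'‖ ≤ d + ε := by
    calc ‖p - x'‖ ≤ ‖p - x‖ + ‖x - x'‖ := norm_sub_le_norm_sub_add_norm_sub _ _ _
      _ ≤ d + ε := by rw [norm_sub_rev p x, norm_sub_rev x x']; linarith
  have htowards : ∀ p, ‖p - x'‖ ≤ δ → ‖f p - x'‖ ≤ α * ‖p - x'‖ := fun p hp => by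
    simpa [hfix] using hf p x' hp (by simpa using (norm_nonneg _).trans hp)
  rw [norm_sub_rev]
  calc ‖f^[P] p - x'‖ ≤ α ^ P * ‖p - x'‖ :=
        norm_iterate_sub_le_of_contracting_towards hα0 hα1 htowards P (hdist.trans hδ)
    _ ≤ α ^ P * (d + ε) := mul_le_mul_of_nonneg_left hdist (pow_nonneg hα0 P)
    _ ≤ ε := hP

end Continuation

theorem norm_sub_lineMap_le_of_endpoints {E : Type*} [SeminormedAddCommGroup E]
    [NormedSpace ℝ E] {y a b a' b' : E} {θ ε₁ ε₂ : ℝ} (hθ0 : 0 ≤ θ) (hθ1 : θ ≤ 1)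
    (hy : ‖y - (a + θ • (b - a))‖ ≤ ε₁) (ha : ‖a - a'‖ ≤ ε₂) (hb : ‖b - b'‖ ≤ ε₂) :
    ‖y - (a' + θ • (b' - a'))‖ ≤ ε₁ + ε₂ := by
  have hsplit : y - (a' + θ • (b' - a')) =
      (y - (a + θ • (b - a))) + ((1 - θ) • (a - a') + θ • (b - b')) := by
    module
  have hconvex : ‖(1 - θ) • (a - a') + θ • (b - b')‖ ≤ ε₂ := by
    calc ‖(1 - θ) • (a - a') + θ • (b - b')‖
        ≤ ‖(1 - θ) • (a - a')‖ + ‖θ • (b - b')‖ := norm_add_le _ _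
      _ = (1 - θ) * ‖a - a'‖ + θ * ‖b - b'‖ := by
        rw [norm_smul, norm_smul, Real.norm_of_nonneg (by linarith), Real.norm_of_nonneg hθ0]
      _ ≤ (1 - θ) * ε₂ + θ * ε₂ := by gcongr
      _ = ε₂ := by ring
  rw [hsplit]
  exact (norm_add_le _ _).trans (add_le_add hy hconvex)

theorem Nat.cast_mul_one_div_le_one {q Q : ℕ} (hq : q ≤ Q) : (q : ℝ) * (1 / Q) ≤ 1 := by
  rw [mul_one_div]
  exact div_le_one_of_le₀ (by exact_mod_cast hq) Q.cast_nonneg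

theorem stmt_14_general (n : ℕ) (z : ℝ → (Fin n → ℝ)) (k α δ ε : ℝ)
    (hα0 : 0 < α) (hα1 : α < 1)
    (hz : ∀ s t : ℝ, 0 ≤ s → s ≤ t → t ≤ 1 → ‖z t - z s‖ ≤ k * (t - s))
    (T : ℝ → (Fin n → ℝ) → (Fin n → ℝ))
    (hTfix : ∀ s : ℝ, 0 ≤ s → s ≤ 1 → T s (z s) = z s)
    (hTcontr : ∀ s : ℝ, 0 ≤ s → s ≤ 1 → ∀ p q : Fin n → ℝ,
      ‖p - z s‖ ≤ δ → ‖q - z s‖ ≤ δ → ‖T s p - T s q‖ ≤ α * ‖p - q‖)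
    (Q : ℕ) (h : ℝ) (hh : h = 1 / (Q : ℝ))
    (hstep : k * h + ε ≤ δ)
    (P : ℕ) (hP : α ^ P * (k * h + ε) ≤ ε)
    (w : ℕ → (Fin n → ℝ)) (hw0 : ‖z 0 - w 0‖ ≤ ε)
    (hwrec : ∀ q : ℕ, 1 ≤ q → q ≤ Q → w q = (T ((q : ℝ) * h))^[P] (w (q - 1)))
    (hinterp : ∀ q : ℕ, 1 ≤ q → q ≤ Q → ∀ s : ℝ, ((q : ℝ) - 1) * h ≤ s → s ≤ (q : ℝ) * h →
      ‖z s - (z (((q : ℝ) - 1) * h) +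
        ((s - ((q : ℝ) - 1) * h) / h) • (z ((q : ℝ) * h) - z (((q : ℝ) - 1) * h)))‖ ≤ ε) :
    ∀ q : ℕ, 1 ≤ q → q ≤ Q → ∀ s : ℝ, ((q : ℝ) - 1) * h ≤ s → s ≤ (q : ℝ) * h →
      ‖z s - (w (q - 1) + ((s - ((q : ℝ) - 1) * h) / h) • (w q - w (q - 1)))‖ ≤ 2 * ε := by
  have hh0 : 0 ≤ h := by rw [hh]; positivity
  have hnode : ∀ q : ℕ, q ≤ Q → 0 ≤ (q : ℝ) * h ∧ (q : ℝ) * h ≤ 1 := fun q hq =>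
    ⟨by positivity, hh ▸ Nat.cast_mul_one_div_le_one hq⟩
  have hnode_err : ∀ q : ℕ, q ≤ Q → ‖z ((q : ℝ) * h) - w q‖ ≤ ε := by
    intro q
    induction q with
    | zero => exact fun _ => by simpa using hw0
    | succ q ih =>
      intro hq
      obtain ⟨hs0, hs1⟩ := hnode (q + 1) hq
      have hmove : ‖z (((q + 1 : ℕ) : ℝ) * h) - z ((q : ℝ) * h)‖ ≤ k * h := by
        have := hz _ _ (hnode q (q.le_succ.trans hq)).1 (by push_cast; linarith) hs1
        rw [Nat.cast_succ, add_one_mul] at this ⊢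
        rwa [add_sub_cancel_left] at this
      rw [hwrec (q + 1) (Nat.le_add_left 1 q) hq, Nat.add_sub_cancel]
      exact norm_sub_iterate_le_of_near_fixedPoint hα0.le hα1.le (hTfix _ hs0 hs1)
        (hTcontr _ hs0 hs1) hmove (ih (q.le_succ.trans hq)) hstep hP
  intro q hq1 hqQ s hs1 hs2
  have hh_pos : 0 < h := by
    rw [hh]; have : (0 : ℝ) < Q := by exact_mod_cast hq1.trans hqQ
    positivity
  have hprev : ((q - 1 : ℕ) : ℝ) = (q : ℝ) - 1 := by rw [Nat.cast_sub hq1, Nat.cast_one]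
  have hleft := hnode_err (q - 1) (q.sub_le 1 |>.trans hqQ)
  rw [hprev] at hleft
  rw [two_mul]
  refine norm_sub_lineMap_le_of_endpoints (div_nonneg (by linarith) hh0) ?_
    (hinterp q hq1 hqQ s hs1 hs2) hleft (hnode_err q hqQ)
  rw [div_le_one hh_pos]
  linarith

/-- If the continuous piecewise linear interpolant of the exact values `z(s_q)` is within
`ε` of `z` uniformly on `[0,1]`, then the continuous piecewise linear interpolant of the
computed continuation iterates `z_q` is within `2ε` of `z` uniformly on `[0,1]`
(maximum norm on `ℝⁿ`, i.e. the sup norm on `Fin n → ℝ`; the interpolants are expressed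
piecewise on each subinterval `[s_{q−1}, s_q]`). -/
theorem stmt_14 (n : ℕ) (hn : 1 ≤ n) (z : ℝ → (Fin n → ℝ)) (k α δ ε : ℝ)
    (hk : 0 < k) (hα0 : 0 < α) (hα1 : α < 1) (hδ : 0 < δ) (hε : 0 < ε) (hεδ : ε ≤ δ)
    (hz : ∀ s t : ℝ, 0 ≤ s → s ≤ t → t ≤ 1 → ‖z t - z s‖ ≤ k * (t - s))
    (T : ℝ → (Fin n → ℝ) → (Fin n → ℝ))
    (hTfix : ∀ s : ℝ, 0 ≤ s → s ≤ 1 → T s (z s) = z s)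
    (hTcontr : ∀ s : ℝ, 0 ≤ s → s ≤ 1 → ∀ p q : Fin n → ℝ,
      ‖p - z s‖ ≤ δ → ‖q - z s‖ ≤ δ → ‖T s p - T s q‖ ≤ α * ‖p - q‖)
    (Q : ℕ) (hQ : 0 < Q) (h : ℝ) (hh : h = 1 / (Q : ℝ))
    (hstep : k * h + ε ≤ δ)
    (P : ℕ) (hP : α ^ P * (k * h + ε) ≤ ε)
    (w : ℕ → (Fin n → ℝ)) (hw0 : ‖z 0 - w 0‖ ≤ ε)
    (hwrec : ∀ q : ℕ, 1 ≤ q → q ≤ Q → w q = (T ((q : ℝ) * h))^[P] (w (q - 1)))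
    (hinterp : ∀ q : ℕ, 1 ≤ q → q ≤ Q → ∀ s : ℝ, ((q : ℝ) - 1) * h ≤ s → s ≤ (q : ℝ) * h →
      ‖z s - (z (((q : ℝ) - 1) * h) +
        ((s - ((q : ℝ) - 1) * h) / h) • (z ((q : ℝ) * h) - z (((q : ℝ) - 1) * h)))‖ ≤ ε) :
    ∀ q : ℕ, 1 ≤ q → q ≤ Q → ∀ s : ℝ, ((q : ℝ) - 1) * h ≤ s → s ≤ (q : ℝ) * h →
      ‖z s - (w (q - 1) + ((s - ((q : ℝ) - 1) * h) / h) • (w q - w (q - 1)))‖ ≤ 2 * ε :=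
  stmt_14_general n z k α δ ε hα0 hα1 hz T hTfix hTcontr Q h hh hstep P hP w hw0 hwrec hinterp
end

section
/- Assume the set 𝒜 of admissible loading paths is nonempty and let W_min denote the minimum of the total work Σ_{q=1}^Q P_q over 𝒜. Then there exists an admissible loading path ({P_q}_{q=1}^Q, {s_q}_{q=0}^Q) ∈ 𝒜 with Σ_{q=1}^Q P_q = W_min such that P_q = 1 and κ(s_q) − κ(s_{q−1}) + γ_{q−1} = δ(s_q) for every q = 1, …, Q−1; moreover this path has the lowest supersolution error γ_Q among all admissible loading paths whose total work is at most W_min. -/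
/-- A loading path: an integer `Q ≥ 1`, numbers of iterations `P_1, …, P_Q` (each `≥ 1`),
and load steps `0 = s_0 ≤ s_1 ≤ ⋯ ≤ s_Q = 1`. -/
structure LoadingPath where
  Q : ℕ
  hQ : 1 ≤ Q
  P : ℕ → ℕ
  hP : ∀ q : ℕ, 1 ≤ q → q ≤ Q → 1 ≤ P q
  s : ℕ → ℝ
  hs0 : s 0 = 0
  hsQ : s Q = 1
  hsmono : ∀ q : ℕ, q < Q → s q ≤ s (q + 1)

/-- The error supersolution of a loading path:
`γ_0 = γ₀` and `γ_q = α^{P_q}(κ(s_q) − κ(s_{q−1}) + γ_{q−1})` for `q = 1, …, Q`. -/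
noncomputable def gammaSeq (α : ℝ) (κ : ℝ → ℝ) (γ0 : ℝ) (L : LoadingPath) : ℕ → ℝ
  | 0 => γ0
  | q + 1 => α ^ L.P (q + 1) * (κ (L.s (q + 1)) - κ (L.s q) + gammaSeq α κ γ0 L q)

/-- Admissibility of a loading path: each initial guess stays in the contraction region,
`κ(s_q) − κ(s_{q−1}) + γ_{q−1} ≤ δ(s_q)` for `q = 1, …, Q`, and `γ_Q ≤ ε`. -/
def Admissible (α ε : ℝ) (κ δ : ℝ → ℝ) (γ0 : ℝ) (L : LoadingPath) : Prop :=
  (∀ q : ℕ, 1 ≤ q → q ≤ L.Q →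
    κ (L.s q) - κ (L.s (q - 1)) + gammaSeq α κ γ0 L (q - 1) ≤ δ (L.s q)) ∧
  gammaSeq α κ γ0 L L.Q ≤ ε

/-- The total work of a loading path: `Σ_{q=1}^Q P_q`. -/
def work (L : LoadingPath) : ℕ := ∑ q ∈ Finset.Icc 1 L.Q, L.P q

/-!
Take greedy steps: one iteration each, with the largest load increment that keeps the initial
guess in the contraction region. By compactness this increment is attained, and by continuity the
constraint is then active unless the load has reached `1`. Induction over the steps of any
admissible path shows that after the same amount of work the greedy state has loaded at least as
far and has an error bound at least as small (up to the discounted load increment the other path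
still has to absorb). Hence the greedy states reach full load within `W_min` iterations, and
spending the remaining iterations on the last greedy step gives the required path.
-/

open Set Filter Topology

namespace LoadingPath

lemma s_monotoneOn (L : LoadingPath) : MonotoneOn L.s (Iic L.Q) :=
  monotoneOn_of_le_succ ordConnected_Iic fun q _ _ hq =>
    L.hsmono q (Order.lt_succ_iff_not_isMax.mpr (not_isMax q) |>.trans_le hq)

lemma s_mem_Icc (L : LoadingPath) {q : ℕ} (hq : q ≤ L.Q) : L.s q ∈ Icc (0 : ℝ) 1 :=
  ⟨L.hs0 ▸ L.s_monotoneOn (Nat.zero_le L.Q) hq (Nat.zero_le q),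
    L.hsQ ▸ L.s_monotoneOn hq (le_refl L.Q) hq⟩

end LoadingPath

lemma gammaSeq_nonneg {α γ0 : ℝ} {κ : ℝ → ℝ} (hα : 0 ≤ α) (hκ : MonotoneOn κ (Icc 0 1))
    (hγ0 : 0 ≤ γ0) (L : LoadingPath) : ∀ q ≤ L.Q, 0 ≤ gammaSeq α κ γ0 L q
  | 0, _ => hγ0
  | q + 1, hq => by
    have hκq := hκ (L.s_mem_Icc (by omega)) (L.s_mem_Icc hq) (L.hsmono q (by omega))
    have hγq := gammaSeq_nonneg hα hκ hγ0 L q (by omega)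
    exact mul_nonneg (pow_nonneg hα _) (by linarith)

def feasibleSteps (κ δ : ℝ → ℝ) (s g : ℝ) : Set ℝ :=
  {t ∈ Icc s 1 | κ t - κ s + g ≤ δ t}

noncomputable def greedyStep (κ δ : ℝ → ℝ) (s g : ℝ) : ℝ :=
  sSup (feasibleSteps κ δ s g)

section GreedyStep

variable {κ δ : ℝ → ℝ} {s g t : ℝ}

lemma self_mem_feasibleSteps (hs : s ≤ 1) (hg : g ≤ δ s) : s ∈ feasibleSteps κ δ s g :=
  ⟨⟨le_rfl, hs⟩, by simpa using hg⟩

lemma isCompact_feasibleSteps (hκ : ContinuousOn κ (Icc s 1)) (hδ : ContinuousOn δ (Icc s 1)) :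
    IsCompact (feasibleSteps κ δ s g) :=
  isCompact_Icc.of_isClosed_subset
    (isClosed_Icc.isClosed_le ((hκ.sub continuousOn_const).add continuousOn_const) hδ)
    (sep_subset _ _)

lemma le_greedyStep (ht : t ∈ feasibleSteps κ δ s g) : t ≤ greedyStep κ δ s g :=
  le_csSup ⟨1, fun _ hu => hu.1.2⟩ ht

lemma greedyStep_mem (hκ : ContinuousOn κ (Icc s 1)) (hδ : ContinuousOn δ (Icc s 1))
    (hs : s ≤ 1) (hg : g ≤ δ s) : greedyStep κ δ s g ∈ feasibleSteps κ δ s g :=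
  (isCompact_feasibleSteps hκ hδ).sSup_mem ⟨s, self_mem_feasibleSteps hs hg⟩

lemma greedyStep_one (hg : g ≤ δ 1) : greedyStep κ δ 1 g = 1 :=
  le_antisymm (csSup_le ⟨1, self_mem_feasibleSteps le_rfl hg⟩ fun _ ht => ht.1.2)
    (le_greedyStep (self_mem_feasibleSteps le_rfl hg))

lemma greedyStep_eq_of_lt_one (hκ : ContinuousOn κ (Icc s 1)) (hδ : ContinuousOn δ (Icc s 1))
    (hs : s ≤ 1) (hg : g ≤ δ s) (h1 : greedyStep κ δ s g < 1) :
    κ (greedyStep κ δ s g) - κ s + g = δ (greedyStep κ δ s g) := by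
  set t := greedyStep κ δ s g
  obtain ⟨⟨hst, ht1⟩, hle⟩ := greedyStep_mem hκ hδ hs hg
  refine hle.antisymm (not_lt.mp fun hlt => ?_)
  -- A strict constraint at `t` stays strict slightly to the right of `t`.
  have hf : ContinuousWithinAt (fun u => κ u - κ s + g - δ u) (Icc s 1) t :=
    ((hκ.sub continuousOn_const).add continuousOn_const).sub hδ t ⟨hst, ht1⟩
  have hIcc : Icc s 1 ∈ 𝓝[>] t := Icc_mem_nhdsGT_of_mem ⟨hst, h1⟩
  have hneg : ∀ᶠ u in 𝓝[Icc s 1] t, κ u - κ s + g - δ u < 0 :=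
    hf.eventually (eventually_lt_nhds (by simpa using hlt))
  have hnear : ∀ᶠ u in 𝓝[>] t, κ u - κ s + g - δ u < 0 ∧ u ∈ Icc s 1 :=
    Eventually.and (nhdsWithin_le_of_mem hIcc hneg) hIcc
  obtain ⟨u, ⟨hu, hus⟩, htu⟩ := (hnear.and self_mem_nhdsWithin).exists
  exact (le_greedyStep ⟨hus, by linarith⟩).not_gt htu

end GreedyStep

structure LoadingSetting (α : ℝ) (κ δ : ℝ → ℝ) : Prop where
  α_nonneg : 0 ≤ α
  α_le_one : α ≤ 1
  κ_continuousOn : ContinuousOn κ (Icc 0 1)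
  κ_monotoneOn : MonotoneOn κ (Icc 0 1)
  δ_continuousOn : ContinuousOn δ (Icc 0 1)

/-- A state is a pair `(load, error bound)`; a greedy step takes the longest feasible load step
and then a single iteration. -/
noncomputable def greedyNext (α : ℝ) (κ δ : ℝ → ℝ) (x : ℝ × ℝ) : ℝ × ℝ :=
  (greedyStep κ δ x.1 x.2, α * (κ (greedyStep κ δ x.1 x.2) - κ x.1 + x.2))

noncomputable def greedy (α : ℝ) (κ δ : ℝ → ℝ) (γ0 : ℝ) (n : ℕ) : ℝ × ℝ :=
  (greedyNext α κ δ)^[n] (0, γ0)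

def ValidState (δ : ℝ → ℝ) (x : ℝ × ℝ) : Prop :=
  x.1 ∈ Icc 0 1 ∧ 0 ≤ x.2 ∧ x.2 ≤ δ x.1

/-- The discount `α * (κ x.1 - κ y.1)` credits the lagging path with one contraction of the load
it still has to absorb; this is what makes the relation invariant under greedy steps. -/
def Dominates (α : ℝ) (κ : ℝ → ℝ) (x y : ℝ × ℝ) : Prop :=
  y.1 ≤ x.1 ∧ x.2 ≤ y.2 + α * (κ x.1 - κ y.1)

section Greedy

variable {α γ0 : ℝ} {κ δ : ℝ → ℝ}

lemma greedy_succ (n : ℕ) : greedy α κ δ γ0 (n + 1) = greedyNext α κ δ (greedy α κ δ γ0 n) :=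
  Function.iterate_succ_apply' _ _ _

lemma greedy_add (m n : ℕ) :
    greedy α κ δ γ0 (m + n) = (greedyNext α κ δ)^[n] (greedy α κ δ γ0 m) := by
  rw [greedy, add_comm, Function.iterate_add_apply, greedy]

lemma validState_greedyNext (h : LoadingSetting α κ δ) {x : ℝ × ℝ} (hx : ValidState δ x) :
    ValidState δ (greedyNext α κ δ x) := by
  obtain ⟨hs, hg0, hgδ⟩ := hx
  have hsub : Icc x.1 1 ⊆ Icc 0 1 := Icc_subset_Icc_left hs.1
  obtain ⟨⟨hst, ht1⟩, hcon⟩ :=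
    greedyStep_mem (h.κ_continuousOn.mono hsub) (h.δ_continuousOn.mono hsub) hs.2 hgδ
  have hκ := h.κ_monotoneOn hs ⟨hs.1.trans hst, ht1⟩ hst
  exact ⟨⟨hs.1.trans hst, ht1⟩, mul_nonneg h.α_nonneg (by linarith),
    (mul_le_of_le_one_left (by linarith) h.α_le_one).trans hcon⟩

lemma validState_iterate_greedyNext (h : LoadingSetting α κ δ) {x : ℝ × ℝ}
    (hx : ValidState δ x) (n : ℕ) : ValidState δ ((greedyNext α κ δ)^[n] x) := by
  induction n with
  | zero => exact hx
  | succ n ih => rw [Function.iterate_succ_apply']; exact validState_greedyNext h ih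

lemma validState_greedy (h : LoadingSetting α κ δ) (h0 : ValidState δ (0, γ0)) (n : ℕ) :
    ValidState δ (greedy α κ δ γ0 n) :=
  validState_iterate_greedyNext h h0 n

lemma greedy_fst_le_succ (h : LoadingSetting α κ δ) (h0 : ValidState δ (0, γ0)) (n : ℕ) :
    (greedy α κ δ γ0 n).1 ≤ (greedy α κ δ γ0 (n + 1)).1 := by
  obtain ⟨hs, -, hgδ⟩ := validState_greedy h h0 n
  rw [greedy_succ]
  exact le_greedyStep (self_mem_feasibleSteps hs.2 hgδ)

lemma iterate_greedyNext_one (hα0 : 0 ≤ α) (hα1 : α ≤ 1) {g : ℝ} (hg0 : 0 ≤ g) (hg : g ≤ δ 1)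
    (n : ℕ) : (greedyNext α κ δ)^[n] (1, g) = (1, α ^ n * g) := by
  induction n with
  | zero => simp
  | succ n ih =>
    have hgn : α ^ n * g ≤ δ 1 := (mul_le_of_le_one_left hg0 (pow_le_one₀ hα0 hα1)).trans hg
    rw [Function.iterate_succ_apply', ih, greedyNext, greedyStep_one hgn, pow_succ]
    simp only [sub_self, zero_add]
    ring_nf

lemma greedy_eq_of_fst_eq_one (h : LoadingSetting α κ δ) (h0 : ValidState δ (0, γ0)) {m n : ℕ}
    (hm : (greedy α κ δ γ0 m).1 = 1) (hmn : m ≤ n) :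
    greedy α κ δ γ0 n = (1, α ^ (n - m) * (greedy α κ δ γ0 m).2) := by
  obtain ⟨-, hg0, hgδ⟩ := validState_greedy h h0 m
  set g := (greedy α κ δ γ0 m).2
  have hx : greedy α κ δ γ0 m = (1, g) := Prod.ext hm rfl
  rw [hm] at hgδ
  rw [← Nat.add_sub_cancel' hmn, greedy_add, hx, Nat.add_sub_cancel_left]
  exact iterate_greedyNext_one h.α_nonneg h.α_le_one hg0 hgδ _

end Greedy

section Dominance

variable {α γ0 ε : ℝ} {κ δ : ℝ → ℝ}

lemma Dominates.greedyNext (hα0 : 0 ≤ α) (hα1 : α ≤ 1) (hκ : MonotoneOn κ (Icc 0 1))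
    {x : ℝ × ℝ} {s g s' : ℝ} (hx1 : x.1 ∈ Icc 0 1) (hxδ : x.2 ≤ δ x.1) (hs : s ∈ Icc 0 1)
    (hs' : s' ≤ 1) (hcon : κ s' - κ s + g ≤ δ s') (hdom : Dominates α κ x (s, g)) :
    Dominates α κ (greedyNext α κ δ x) (s', α * (κ s' - κ s + g)) := by
  obtain ⟨hsx, hgx⟩ := hdom
  dsimp only at hsx hgx
  have hκsx := hκ hs hx1 hsx
  have hlag : x.2 - κ x.1 ≤ g - κ s := by
    linarith [mul_le_of_le_one_left (sub_nonneg.mpr hκsx) hα1]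
  refine ⟨?_, ?_⟩
  · show s' ≤ greedyStep κ δ x.1 x.2
    rcases le_or_gt s' x.1 with h | h
    · exact h.trans (le_greedyStep (self_mem_feasibleSteps hx1.2 hxδ))
    · exact le_greedyStep ⟨⟨h.le, hs'⟩, by linarith⟩
  · show α * (κ (greedyStep κ δ x.1 x.2) - κ x.1 + x.2)
      ≤ α * (κ s' - κ s + g) + α * (κ (greedyStep κ δ x.1 x.2) - κ s')
    linarith [mul_le_mul_of_nonneg_left hlag hα0]

/-- A load step of a loading path with `P` iterations is matched by `P` greedy steps:
the first one absorbs the load step, the others stay put. -/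
lemma Dominates.iterate_greedyNext (h : LoadingSetting α κ δ) {x : ℝ × ℝ} {s g s' : ℝ}
    (hx : ValidState δ x) (hs : s ∈ Icc 0 1) (hs' : s' ∈ Icc 0 1)
    (hc0 : 0 ≤ κ s' - κ s + g) (hcon : κ s' - κ s + g ≤ δ s') (hdom : Dominates α κ x (s, g))
    {P : ℕ} (hP : 1 ≤ P) :
    Dominates α κ ((_root_.greedyNext α κ δ)^[P] x) (s', α ^ P * (κ s' - κ s + g)) := by
  induction P, hP using Nat.le_induction with
  | base =>
    simpa using hdom.greedyNext h.α_nonneg h.α_le_one h.κ_monotoneOn hx.1 hx.2.2 hs hs'.2 hcon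
  | succ P _ ih =>
    have hy := validState_iterate_greedyNext h hx P
    have hstay : κ s' - κ s' + α ^ P * (κ s' - κ s + g) ≤ δ s' := by
      rw [sub_self, zero_add]
      exact (mul_le_of_le_one_left hc0 (pow_le_one₀ h.α_nonneg h.α_le_one)).trans hcon
    rw [Function.iterate_succ_apply', pow_succ', mul_assoc, ← zero_add (α ^ P * _),
      ← sub_self (κ s')]
    exact ih.greedyNext h.α_nonneg h.α_le_one h.κ_monotoneOn hy.1 hy.2.2 hs' hs'.2 hstay

lemma dominates_greedy_gammaSeq (h : LoadingSetting α κ δ) (h0 : ValidState δ (0, γ0))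
    {L : LoadingPath} (hL : Admissible α ε κ δ γ0 L) :
    ∀ q ≤ L.Q, Dominates α κ (greedy α κ δ γ0 (∑ i ∈ Finset.Icc 1 q, L.P i))
      (L.s q, gammaSeq α κ γ0 L q)
  | 0, _ => by simp [Dominates, greedy, gammaSeq, L.hs0]
  | q + 1, hq => by
    have hsq := L.s_mem_Icc (q := q) (by omega)
    have hκq := h.κ_monotoneOn hsq (L.s_mem_Icc hq) (L.hsmono q (by omega))
    have hγq := gammaSeq_nonneg h.α_nonneg h.κ_monotoneOn h0.2.1 L q (by omega)
    have hcon := hL.1 (q + 1) (by omega) hq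
    rw [Nat.add_sub_cancel] at hcon
    rw [Finset.sum_Icc_succ_top (by omega), greedy_add]
    exact (dominates_greedy_gammaSeq h h0 hL q (by omega)).iterate_greedyNext h
      (validState_greedy h h0 _) hsq (L.s_mem_Icc hq) (by linarith) hcon (L.hP _ (by omega) hq)

lemma greedy_work_of_admissible (h : LoadingSetting α κ δ) (h0 : ValidState δ (0, γ0))
    {L : LoadingPath} (hL : Admissible α ε κ δ γ0 L) :
    (greedy α κ δ γ0 (work L)).1 = 1 ∧ (greedy α κ δ γ0 (work L)).2 ≤ gammaSeq α κ γ0 L L.Q := by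
  obtain ⟨h1, h2⟩ := dominates_greedy_gammaSeq h h0 hL L.Q le_rfl
  change L.s L.Q ≤ (greedy α κ δ γ0 (work L)).1 at h1
  change (greedy α κ δ γ0 (work L)).2 ≤ gammaSeq α κ γ0 L L.Q
    + α * (κ (greedy α κ δ γ0 (work L)).1 - κ (L.s L.Q)) at h2
  have hW : (greedy α κ δ γ0 (work L)).1 = 1 :=
    le_antisymm (validState_greedy h h0 _).1.2 (L.hsQ ▸ h1)
  rw [hW, L.hsQ, sub_self, mul_zero, add_zero] at h2
  exact ⟨hW, h2⟩

lemma greedy_snd_le_gammaSeq (h : LoadingSetting α κ δ) (h0 : ValidState δ (0, γ0))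
    {L : LoadingPath} (hL : Admissible α ε κ δ γ0 L) {W : ℕ} (hW : work L ≤ W) :
    (greedy α κ δ γ0 W).2 ≤ gammaSeq α κ γ0 L L.Q := by
  obtain ⟨h1, h2⟩ := greedy_work_of_admissible h h0 hL
  rw [greedy_eq_of_fst_eq_one h h0 h1 hW]
  exact (mul_le_of_le_one_left (validState_greedy h h0 _).2.1
    (pow_le_one₀ h.α_nonneg h.α_le_one)).trans h2

end Dominance

/-- The greedy states up to a time `N` at which the load is `1`, as a loading path whose last
step carries the remaining work `W - N`. -/
noncomputable def greedyPath (α : ℝ) (κ δ : ℝ → ℝ) (γ0 : ℝ) (N W : ℕ) (hN : 1 ≤ N)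
    (hN1 : (greedy α κ δ γ0 N).1 = 1)
    (hmono : ∀ q, (greedy α κ δ γ0 q).1 ≤ (greedy α κ δ γ0 (q + 1)).1) : LoadingPath where
  Q := N
  hQ := hN
  P q := if q = N then W - N + 1 else 1
  hP q _ _ := by split_ifs <;> omega
  s q := (greedy α κ δ γ0 q).1
  hs0 := rfl
  hsQ := hN1
  hsmono q _ := hmono q

section GreedyPath

variable {α γ0 : ℝ} {κ δ : ℝ → ℝ} {N W : ℕ} {hN : 1 ≤ N} {hN1 : (greedy α κ δ γ0 N).1 = 1}
  {hmono : ∀ q, (greedy α κ δ γ0 q).1 ≤ (greedy α κ δ γ0 (q + 1)).1}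

local notation "Lg" => greedyPath α κ δ γ0 N W hN hN1 hmono

lemma greedyPath_P_of_lt {q : ℕ} (hq : q < N) : (Lg).P q = 1 :=
  if_neg hq.ne

lemma greedyPath_s_succ (q : ℕ) :
    (Lg).s (q + 1) = greedyStep κ δ (greedy α κ δ γ0 q).1 (greedy α κ δ γ0 q).2 := by
  change (greedy α κ δ γ0 (q + 1)).1 = _
  rw [greedy_succ]
  rfl

lemma gammaSeq_greedyPath_of_lt : ∀ q < N, gammaSeq α κ γ0 Lg q = (greedy α κ δ γ0 q).2
  | 0, _ => rfl
  | q + 1, hq => by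
    rw [gammaSeq, greedyPath_P_of_lt hq, pow_one, gammaSeq_greedyPath_of_lt q (by omega),
      greedyPath_s_succ, greedy_succ]
    rfl

lemma gammaSeq_greedyPath_top :
    gammaSeq α κ γ0 Lg N = α ^ (W - N) * (greedy α κ δ γ0 N).2 := by
  obtain ⟨M, hM⟩ : ∃ M, N = M + 1 := ⟨N - 1, by omega⟩
  have hP : (Lg).P (M + 1) = W - N + 1 := if_pos hM.symm
  rw [congrArg (gammaSeq α κ γ0 Lg) hM, congrArg (fun n => (greedy α κ δ γ0 n).2) hM, gammaSeq,
    hP,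
    gammaSeq_greedyPath_of_lt M (by omega), greedyPath_s_succ, greedy_succ, pow_succ, mul_assoc]
  rfl

lemma work_greedyPath (hNW : N ≤ W) : work Lg = W := by
  change ∑ q ∈ Finset.Icc 1 N, (Lg).P q = W
  rw [← Finset.Ico_insert_right hN, Finset.sum_insert Finset.right_notMem_Ico,
    Finset.sum_congr rfl fun q hq => greedyPath_P_of_lt (Finset.mem_Ico.mp hq).2]
  change (if N = N then W - N + 1 else 1) + ∑ q ∈ Finset.Ico 1 N, 1 = W
  rw [if_pos rfl, Finset.sum_const, Nat.card_Ico, smul_eq_mul, mul_one]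
  omega

lemma greedyPath_increment {q : ℕ} (hq : q < N) :
    κ ((Lg).s (q + 1)) - κ ((Lg).s q) + gammaSeq α κ γ0 Lg q
      = κ (greedyStep κ δ (greedy α κ δ γ0 q).1 (greedy α κ δ γ0 q).2)
        - κ (greedy α κ δ γ0 q).1 + (greedy α κ δ γ0 q).2 := by
  rw [gammaSeq_greedyPath_of_lt q hq, greedyPath_s_succ]
  rfl

lemma greedyPath_constraint_le (h : LoadingSetting α κ δ) (h0 : ValidState δ (0, γ0))
    (q : ℕ) (hq1 : 1 ≤ q) (hqN : q ≤ N) :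
    κ ((Lg).s q) - κ ((Lg).s (q - 1)) + gammaSeq α κ γ0 Lg (q - 1) ≤ δ ((Lg).s q) := by
  obtain ⟨n, rfl⟩ : ∃ n, q = n + 1 := ⟨q - 1, by omega⟩
  rw [Nat.add_sub_cancel, greedyPath_increment (by omega), greedyPath_s_succ]
  obtain ⟨hs, -, hgδ⟩ := validState_greedy h h0 n
  have hsub : Icc (greedy α κ δ γ0 n).1 1 ⊆ Icc 0 1 := Icc_subset_Icc_left hs.1
  exact (greedyStep_mem (h.κ_continuousOn.mono hsub) (h.δ_continuousOn.mono hsub) hs.2 hgδ).2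

lemma greedyPath_constraint_eq (h : LoadingSetting α κ δ) (h0 : ValidState δ (0, γ0))
    (hfirst : ∀ n < N, (greedy α κ δ γ0 n).1 ≠ 1) (q : ℕ) (hq1 : 1 ≤ q) (hqN : q < N) :
    κ ((Lg).s q) - κ ((Lg).s (q - 1)) + gammaSeq α κ γ0 Lg (q - 1) = δ ((Lg).s q) := by
  obtain ⟨n, rfl⟩ : ∃ n, q = n + 1 := ⟨q - 1, by omega⟩
  have hlt : (Lg).s (n + 1) < 1 :=
    (validState_greedy h h0 (n + 1)).1.2.lt_of_ne (hfirst (n + 1) hqN)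
  rw [Nat.add_sub_cancel, greedyPath_increment (by omega), greedyPath_s_succ]
  rw [greedyPath_s_succ] at hlt
  obtain ⟨hs, -, hgδ⟩ := validState_greedy h h0 n
  have hsub : Icc (greedy α κ δ γ0 n).1 1 ⊆ Icc 0 1 := Icc_subset_Icc_left hs.1
  exact greedyStep_eq_of_lt_one (h.κ_continuousOn.mono hsub) (h.δ_continuousOn.mono hsub) hs.2
    hgδ hlt

end GreedyPath

theorem stmt_17_general (ε α γ0 : ℝ) (κ δ : ℝ → ℝ)
    (hα0 : 0 < α) (hα1 : α < 1)
    (hκc : ContinuousOn κ (Set.Icc 0 1)) (hκm : MonotoneOn κ (Set.Icc 0 1))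
    (hδc : ContinuousOn δ (Set.Icc 0 1))
    (hγ0 : 0 ≤ γ0) (hγ0δ : γ0 < δ 0)
    (Wmin : ℕ)
    (hWmin_attained : ∃ L : LoadingPath, Admissible α ε κ δ γ0 L ∧ work L = Wmin) :
    ∃ L : LoadingPath, Admissible α ε κ δ γ0 L ∧ work L = Wmin ∧
      (∀ q : ℕ, 1 ≤ q → q < L.Q → L.P q = 1 ∧
        κ (L.s q) - κ (L.s (q - 1)) + gammaSeq α κ γ0 L (q - 1) = δ (L.s q)) ∧
      (∀ L' : LoadingPath, Admissible α ε κ δ γ0 L' → work L' ≤ Wmin →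
        gammaSeq α κ γ0 L L.Q ≤ gammaSeq α κ γ0 L' L'.Q) := by
  obtain ⟨L0, hL0, rfl⟩ := hWmin_attained
  have h : LoadingSetting α κ δ := ⟨hα0.le, hα1.le, hκc, hκm, hδc⟩
  have h0 : ValidState δ (0, γ0) := ⟨⟨le_rfl, zero_le_one⟩, hγ0, hγ0δ.le⟩
  have hex : ∃ n, (greedy α κ δ γ0 n).1 = 1 := ⟨_, (greedy_work_of_admissible h h0 hL0).1⟩
  have hN1 := Nat.find_spec hex
  have hN : 1 ≤ Nat.find hex := (Nat.find_pos hex).mpr (by simp [greedy])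
  have hNW : Nat.find hex ≤ work L0 := Nat.find_min' hex (greedy_work_of_admissible h h0 hL0).1
  set L := greedyPath α κ δ γ0 (Nat.find hex) (work L0) hN hN1 (greedy_fst_le_succ h h0)
  have hγL : gammaSeq α κ γ0 L L.Q = (greedy α κ δ γ0 (work L0)).2 := by
    rw [greedy_eq_of_fst_eq_one h h0 hN1 hNW]
    exact gammaSeq_greedyPath_top
  refine ⟨L, ⟨greedyPath_constraint_le h h0, ?_⟩, work_greedyPath hNW,
    fun q hq1 hqN => ⟨greedyPath_P_of_lt hqN,
      greedyPath_constraint_eq h h0 (fun n hn => Nat.find_min hex hn) q hq1 hqN⟩,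
    fun L' hL' hW' => hγL ▸ greedy_snd_le_gammaSeq h h0 hL' hW'⟩
  exact hγL ▸ (greedy_snd_le_gammaSeq h h0 hL0 le_rfl).trans hL0.2

/-- Among admissible loading paths of minimal total work `W_min`, there is one with a
single iteration per step and maximal steps (equality in the contraction constraint) at
every step but the last; it has the lowest supersolution error among all admissible
paths of total work at most `W_min`. -/
theorem stmt_17 (ε α γ0 : ℝ) (κ δ : ℝ → ℝ)
    (hε : 0 < ε) (hα0 : 0 < α) (hα1 : α < 1)
    (hκc : ContinuousOn κ (Set.Icc 0 1)) (hκm : MonotoneOn κ (Set.Icc 0 1))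
    (hκ0 : κ 0 = 0) (hκnn : ∀ t ∈ Set.Icc (0 : ℝ) 1, 0 ≤ κ t)
    (hδc : ContinuousOn δ (Set.Icc 0 1)) (hδa : AntitoneOn δ (Set.Icc 0 1))
    (hδpos : ∀ t ∈ Set.Icc (0 : ℝ) 1, 0 < δ t)
    (hγ0 : 0 ≤ γ0) (hγ0δ : γ0 < δ 0)
    (Wmin : ℕ)
    (hWmin_attained : ∃ L : LoadingPath, Admissible α ε κ δ γ0 L ∧ work L = Wmin)
    (hWmin_min : ∀ L : LoadingPath, Admissible α ε κ δ γ0 L → Wmin ≤ work L) :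
    ∃ L : LoadingPath, Admissible α ε κ δ γ0 L ∧ work L = Wmin ∧
      (∀ q : ℕ, 1 ≤ q → q < L.Q → L.P q = 1 ∧
        κ (L.s q) - κ (L.s (q - 1)) + gammaSeq α κ γ0 L (q - 1) = δ (L.s q)) ∧
      (∀ L' : LoadingPath, Admissible α ε κ δ γ0 L' → work L' ≤ Wmin →
        gammaSeq α κ γ0 L L.Q ≤ gammaSeq α κ γ0 L' L'.Q) :=
  stmt_17_general ε α γ0 κ δ hα0 hα1 hκc hκm hδc hγ0 hγ0δ Wmin hWmin_attained
end

section
/- The optimal loading-path problem is well posed: the set 𝒜 of admissible loading paths is nonempty, and the total work Σ_{q=1}^Q P_q attains its minimum over 𝒜. -/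
namespace LoadingPath

section Admissibility

variable {α ε γ0 : ℝ} {κ δ : ℝ → ℝ} (L : LoadingPath)

theorem gammaSeq_succ_le (hα : 0 ≤ α) {q : ℕ}
    (h : κ (L.s (q + 1)) - κ (L.s q) + gammaSeq α κ γ0 L q ≤ δ (L.s (q + 1))) :
    gammaSeq α κ γ0 L (q + 1) ≤ α ^ L.P (q + 1) * δ (L.s (q + 1)) :=
  mul_le_mul_of_nonneg_left h (pow_nonneg hα _)

theorem steps_le_of_contraction (hα : 0 ≤ α) (c : ℝ)
    (hfirst : κ (L.s 1) - κ (L.s 0) + γ0 ≤ δ (L.s 1))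
    (hinc : ∀ q, 1 ≤ q → q < L.Q → κ (L.s (q + 1)) - κ (L.s q) + c ≤ δ (L.s (q + 1)))
    (hcontract : ∀ q, 1 ≤ q → q ≤ L.Q → α ^ L.P q * δ (L.s q) ≤ c) :
    ∀ q, 1 ≤ q → q ≤ L.Q →
      κ (L.s q) - κ (L.s (q - 1)) + gammaSeq α κ γ0 L (q - 1) ≤ δ (L.s q) := by
  intro q hq
  induction q, hq using Nat.le_induction with
  | base => intro; exact hfirst
  | succ q hq ih =>
    intro hqQ
    obtain ⟨q, rfl⟩ : ∃ r, q = r + 1 := ⟨q - 1, by omega⟩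
    have hprev : κ (L.s (q + 1)) - κ (L.s q) + gammaSeq α κ γ0 L q ≤ δ (L.s (q + 1)) := by
      simpa using ih (by omega)
    have hγ : gammaSeq α κ γ0 L (q + 1) ≤ c :=
      (L.gammaSeq_succ_le hα hprev).trans (hcontract (q + 1) hq (by omega))
    simpa using (add_le_add_right hγ _).trans (hinc (q + 1) hq hqQ)

theorem admissible_of_contraction (hα : 0 ≤ α) (c : ℝ)
    (hfirst : κ (L.s 1) - κ (L.s 0) + γ0 ≤ δ (L.s 1))
    (hinc : ∀ q, 1 ≤ q → q < L.Q → κ (L.s (q + 1)) - κ (L.s q) + c ≤ δ (L.s (q + 1)))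
    (hcontract : ∀ q, 1 ≤ q → q ≤ L.Q → α ^ L.P q * δ (L.s q) ≤ c)
    (hfinal : α ^ L.P L.Q * δ (L.s L.Q) ≤ ε) :
    Admissible α ε κ δ γ0 L := by
  have hsteps := L.steps_le_of_contraction hα c hfirst hinc hcontract
  refine ⟨hsteps, ?_⟩
  obtain ⟨Q, hQ⟩ : ∃ r, L.Q = r + 1 := ⟨L.Q - 1, by have := L.hQ; omega⟩
  have hlast := hsteps L.Q L.hQ le_rfl
  rw [hQ, Nat.add_sub_cancel] at hlast
  rw [hQ] at hfinal ⊢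
  exact (L.gammaSeq_succ_le hα hlast).trans hfinal

end Admissibility

-- `q - 1` is truncated, so `s_0 = s_1 = 0`: this is the zero-load first step.
noncomputable def uniform (n p : ℕ) : LoadingPath where
  Q := n + 2
  hQ := by omega
  P _ := p + 1
  hP _ _ _ := by omega
  s q := ((q - 1 : ℕ) : ℝ) / (n + 1)
  hs0 := by simp
  hsQ := by push_cast; field_simp
  hsmono q _ := by gcongr; omega

theorem uniform_s_mem_Icc (n p : ℕ) {q : ℕ} (hq : q ≤ (uniform n p).Q) :
    (uniform n p).s q ∈ Set.Icc (0 : ℝ) 1 := by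
  simp only [uniform, Set.mem_Icc]
  refine ⟨by positivity, div_le_one_of_le₀ ?_ (by positivity)⟩
  exact_mod_cast (show q - 1 ≤ n + 1 by simp only [uniform] at hq; omega)

theorem uniform_s_succ_sub (n p : ℕ) {q : ℕ} (hq : 1 ≤ q) :
    (uniform n p).s (q + 1) - (uniform n p).s q = 1 / (n + 1) := by
  simp only [uniform, Nat.add_sub_cancel, Nat.cast_sub hq]
  field_simp
  ring

end LoadingPath

open LoadingPath

theorem exists_admissible {ε α γ0 : ℝ} {κ δ : ℝ → ℝ}
    (hε : 0 < ε) (hα0 : 0 < α) (hα1 : α < 1) (hκc : ContinuousOn κ (Set.Icc 0 1))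
    (hδa : AntitoneOn δ (Set.Icc 0 1)) (hδpos : ∀ t ∈ Set.Icc (0 : ℝ) 1, 0 < δ t)
    (hγ0δ : γ0 < δ 0) :
    ∃ L : LoadingPath, Admissible α ε κ δ γ0 L := by
  have h0 : (0 : ℝ) ∈ Set.Icc (0 : ℝ) 1 := by norm_num
  have h1 : (1 : ℝ) ∈ Set.Icc (0 : ℝ) 1 := by norm_num
  set m := δ 1 / 2
  have hm : 0 < m := half_pos (hδpos 1 h1)
  obtain ⟨η, hη, hκη⟩ := Metric.uniformContinuousOn_iff.mp
    (isCompact_Icc.uniformContinuousOn_of_continuous hκc) m hm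
  obtain ⟨n, hn⟩ := exists_nat_one_div_lt hη
  obtain ⟨p, hp⟩ := exists_pow_lt_of_lt_one (div_pos (lt_min hε hm) (hδpos 0 h0)) hα1
  have hcontract : ∀ q ≤ n + 2, α ^ (p + 1) * δ ((uniform n p).s q) ≤ min ε m := by
    intro q hq
    have hmem := uniform_s_mem_Icc n p hq
    calc α ^ (p + 1) * δ ((uniform n p).s q) ≤ α ^ p * δ 0 := by
          refine mul_le_mul ?_ (hδa h0 hmem hmem.1) (hδpos _ hmem).le (by positivity)
          exact pow_le_pow_of_le_one hα0.le hα1.le (Nat.le_succ p)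
      _ ≤ min ε m := ((lt_div_iff₀ (hδpos 0 h0)).mp hp).le
  refine ⟨uniform n p, admissible_of_contraction _ hα0.le m ?_ ?_ ?_ ?_⟩
  · simpa [uniform] using hγ0δ.le
  · intro q hq hqQ
    have hmem := uniform_s_mem_Icc n p hqQ.le
    have hmem' := uniform_s_mem_Icc n p (Nat.succ_le_of_lt hqQ)
    have hinc : |κ ((uniform n p).s (q + 1)) - κ ((uniform n p).s q)| < m := by
      refine hκη _ hmem' _ hmem ?_
      rw [Real.dist_eq, uniform_s_succ_sub n p hq, abs_of_pos (by positivity)]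
      exact hn
    have hδ1 : δ 1 ≤ δ ((uniform n p).s (q + 1)) := hδa hmem' h1 hmem'.2
    have hδ1m : δ 1 = 2 * m := by ring
    linarith [le_abs_self (κ ((uniform n p).s (q + 1)) - κ ((uniform n p).s q))]
  · exact fun q _ hq => (hcontract q hq).trans (min_le_right _ _)
  · exact (hcontract _ le_rfl).trans (min_le_left _ _)

theorem stmt_18_general (ε α γ0 : ℝ) (κ δ : ℝ → ℝ)
    (hε : 0 < ε) (hα0 : 0 < α) (hα1 : α < 1)
    (hκc : ContinuousOn κ (Set.Icc 0 1))
    (hδa : AntitoneOn δ (Set.Icc 0 1))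
    (hδpos : ∀ t ∈ Set.Icc (0 : ℝ) 1, 0 < δ t)
    (hγ0δ : γ0 < δ 0) :
    (∃ L : LoadingPath, Admissible α ε κ δ γ0 L) ∧
    (∃ L : LoadingPath, Admissible α ε κ δ γ0 L ∧
      ∀ L' : LoadingPath, Admissible α ε κ δ γ0 L' → work L ≤ work L') := by
  obtain ⟨L, hL⟩ := exists_admissible hε hα0 hα1 hκc hδa hδpos hγ0δ
  let admissible : Set LoadingPath := {L | Admissible α ε κ δ γ0 L}
  exact ⟨⟨L, hL⟩, Function.argminOn work admissible ⟨L, hL⟩,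
    Function.argminOn_mem work admissible _, fun _ hL' => Function.argminOn_le work admissible hL'⟩

/-- The optimal loading-path problem is well posed: the set of admissible loading paths
is nonempty, and the total work attains its minimum over admissible paths. -/
theorem stmt_18 (ε α γ0 : ℝ) (κ δ : ℝ → ℝ)
    (hε : 0 < ε) (hα0 : 0 < α) (hα1 : α < 1)
    (hκc : ContinuousOn κ (Set.Icc 0 1)) (hκm : MonotoneOn κ (Set.Icc 0 1))
    (hκ0 : κ 0 = 0) (hκnn : ∀ t ∈ Set.Icc (0 : ℝ) 1, 0 ≤ κ t)
    (hδc : ContinuousOn δ (Set.Icc 0 1)) (hδa : AntitoneOn δ (Set.Icc 0 1))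
    (hδpos : ∀ t ∈ Set.Icc (0 : ℝ) 1, 0 < δ t)
    (hγ0 : 0 ≤ γ0) (hγ0δ : γ0 < δ 0) :
    (∃ L : LoadingPath, Admissible α ε κ δ γ0 L) ∧
    (∃ L : LoadingPath, Admissible α ε κ δ γ0 L ∧
      ∀ L' : LoadingPath, Admissible α ε κ δ γ0 L' → work L ≤ work L') :=
  stmt_18_general ε α γ0 κ δ hε hα0 hα1 hκc hδa hδpos hγ0δ
end

section
/- A load step performed with at least two iterations can be split: let 0 ≤ s_j < s_{j+1} ≤ 1 and let P ≥ 2 be an integer such that κ(s_{j+1}) − κ(s_j) + α^P δ(s_j) = δ(s_{j+1}). Then there exists Δs with 0 < Δs < s_{j+1} − s_j such that κ(s_j + Δs) − κ(s_j) + α δ(s_j) = δ(s_j + Δs). -/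
/-! The gap `t ↦ κ t - κ s_j + α δ(s_j) - δ t` is `(α - 1) δ(s_j) < 0` at `s_j` and, by the
hypothesis, `(α - α ^ P) δ(s_j) > 0` at `s_{j+1}` since `P ≥ 2`; it vanishes strictly in between
by the intermediate value theorem. -/

open Set

theorem exists_mem_Ioo_eq_of_lt_of_gt {α : Type*} [ConditionallyCompleteLinearOrder α]
    [TopologicalSpace α] [OrderTopology α] [DenselyOrdered α] {f g : α → ℝ} {a b : α}
    (hab : a ≤ b) (hf : ContinuousOn f (Icc a b)) (hg : ContinuousOn g (Icc a b))
    (ha : f a < g a) (hb : g b < f b) : ∃ t ∈ Ioo a b, f t = g t := by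
  obtain ⟨t, ht, hzero⟩ :=
    intermediate_value_Ioo hab (hf.sub hg) ⟨sub_neg.2 ha, sub_pos.2 hb⟩
  exact ⟨t, ht, sub_eq_zero.1 hzero⟩

theorem stmt_19_general (α : ℝ) (hα0 : 0 < α) (hα1 : α < 1) (κ δ : ℝ → ℝ)
    (hκc : ContinuousOn κ (Set.Icc 0 1))
    (hδc : ContinuousOn δ (Set.Icc 0 1))
    (hδpos : ∀ t ∈ Set.Icc (0 : ℝ) 1, 0 < δ t)
    (sj sj1 : ℝ) (hsj : 0 ≤ sj) (hlt : sj < sj1) (hsj1 : sj1 ≤ 1)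
    (P : ℕ) (hP : 2 ≤ P)
    (heq : κ sj1 - κ sj + α ^ P * δ sj = δ sj1) :
    ∃ Δs : ℝ, 0 < Δs ∧ Δs < sj1 - sj ∧
      κ (sj + Δs) - κ sj + α * δ sj = δ (sj + Δs) := by
  have hsub : Icc sj sj1 ⊆ Icc 0 1 := Icc_subset_Icc hsj hsj1
  have hδsj : 0 < δ sj := hδpos sj ⟨hsj, hlt.le.trans hsj1⟩
  have hαP : α ^ P < α := pow_lt_self_of_lt_one₀ hα0 hα1 hP
  obtain ⟨t, ⟨hsjt, htsj1⟩, ht⟩ := exists_mem_Ioo_eq_of_lt_of_gt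
    (f := fun t ↦ κ t - κ sj + α * δ sj) hlt.le
    (((hκc.mono hsub).sub continuousOn_const).add continuousOn_const) (hδc.mono hsub)
    (by nlinarith) (by nlinarith)
  refine ⟨t - sj, by linarith, by linarith, ?_⟩
  rwa [add_sub_cancel]

/-- A load step performed with at least two iterations can be split: if
`κ(s_{j+1}) − κ(s_j) + α^P δ(s_j) = δ(s_{j+1})` with `P ≥ 2`, then there is
`0 < Δs < s_{j+1} − s_j` with `κ(s_j + Δs) − κ(s_j) + α δ(s_j) = δ(s_j + Δs)`. -/
theorem stmt_19 (α : ℝ) (hα0 : 0 < α) (hα1 : α < 1) (κ δ : ℝ → ℝ)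
    (hκc : ContinuousOn κ (Set.Icc 0 1)) (hκm : MonotoneOn κ (Set.Icc 0 1))
    (hκnn : ∀ t ∈ Set.Icc (0 : ℝ) 1, 0 ≤ κ t)
    (hδc : ContinuousOn δ (Set.Icc 0 1)) (hδa : AntitoneOn δ (Set.Icc 0 1))
    (hδpos : ∀ t ∈ Set.Icc (0 : ℝ) 1, 0 < δ t)
    (sj sj1 : ℝ) (hsj : 0 ≤ sj) (hlt : sj < sj1) (hsj1 : sj1 ≤ 1)
    (P : ℕ) (hP : 2 ≤ P)
    (heq : κ sj1 - κ sj + α ^ P * δ sj = δ sj1) :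
    ∃ Δs : ℝ, 0 < Δs ∧ Δs < sj1 - sj ∧
      κ (sj + Δs) - κ sj + α * δ sj = δ (sj + Δs) :=
  stmt_19_general α hα0 hα1 κ δ hκc hδc hδpos sj sj1 hsj hlt hsj1 P hP heq
end
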